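/- arXiv:math/0603745 — 6 statements merged into one kernel-verified Lean document; each statement's English description precedes it below -/
import Mathlib

section
/- Let (λ_{b,k}, 2 ≤ k ≤ b < ∞) be an array of nonnegative real numbers satisfying λ_{b,k} = λ_{b+1,k} + λ_{b+1,k+1} for all 2 ≤ k ≤ b. Then there exists a unique finite Borel measure Λ on [0,1] such that λ_{b,k} = ∫₀¹ x^{k−2}(1−x)^{b−k} Λ(dx) for all 2 ≤ k ≤ b. -/
set_option maxHeartbeats 1000000



open Finset MeasureTheory

/-- A composition of a positive integer: a nonempty list of positive parts. -/
def IsComposition (c : List ℕ) : Prop := c ≠ [] ∧ ∀ x ∈ c, 0 < x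

/-- An infinite decrement matrix: nonnegative triangular array with rows summing to 1. -/
def IsDecrementMatrix (q : ℕ → ℕ → ℝ) : Prop :=
  (∀ b k, 1 ≤ k → k ≤ b → 0 ≤ q b k) ∧
  ∀ b, 1 ≤ b → ∑ k ∈ Finset.Icc 1 b, q b k = 1

/-- Right-hand side of Möhle's recursion for `p` at the composition `c`, with coefficients
from the decrement matrix `q`. -/
noncomputable def mohleRHS (q : ℕ → ℕ → ℝ) (p : List ℕ → ℝ) (c : List ℕ) : ℝ :=
  q c.sum 1 / (c.sum : ℝ) *
      ∑ j ∈ Finset.range c.length, (if c.getD j 0 = 1 then p (c.eraseIdx j) else 0) +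
    ∑ k ∈ Finset.Icc 2 c.sum, q c.sum k *
      ∑ j ∈ Finset.range c.length,
        (if k ≤ c.getD j 0 then
            ((c.getD j 0).choose k : ℝ) / (c.sum.choose k : ℝ) * p (c.set j (c.getD j 0 - k + 1))
          else 0)

/-- Möhle's recursion holds for `p` at the composition `c`. -/
def MohleRec (q : ℕ → ℕ → ℝ) (p : List ℕ → ℝ) (c : List ℕ) : Prop := p c = mohleRHS q p c

/-- The (backward) consistency recursion for a decrement matrix, at level `b`. -/
def ConsistencyRec (q : ℕ → ℕ → ℝ) (b : ℕ) : Prop :=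
  (∀ k, 2 ≤ k → k ≤ b →
    q b k = ((k : ℝ) + 1) / ((b : ℝ) + 1) * q (b + 1) (k + 1)
      + ((b : ℝ) + 1 - (k : ℝ)) / ((b : ℝ) + 1) * q (b + 1) k
      + 1 / ((b : ℝ) + 1) * q (b + 1) 1 * q b k
      + 2 / ((b : ℝ) + 1) * q (b + 1) 2 * q b k) ∧
  q b 1 = (b : ℝ) / ((b : ℝ) + 1) * q (b + 1) 1
    + 1 / ((b : ℝ) + 1) * q (b + 1) 1 * q b 1
    + 2 / ((b : ℝ) + 1) * q (b + 1) 2 * q b 1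

/-- A finite EPPF on compositions of `m ≤ n`: nonnegative, symmetric, normalized,
satisfying the addition rule below level `n` (with the convention `p(∅) = 1`). -/
def IsFiniteEPPF (n : ℕ) (p : List ℕ → ℝ) : Prop :=
  p [] = 1 ∧ p [1] = 1 ∧
  (∀ c, IsComposition c → c.sum ≤ n → 0 ≤ p c) ∧
  (∀ c c', IsComposition c → c.sum ≤ n → List.Perm c c' → p c = p c') ∧
  ∀ c, IsComposition c → c.sum < n →
    p c = p (c ++ [1]) + ∑ i ∈ Finset.range c.length, p (c.set i (c.getD i 0 + 1))

/-- An infinite EPPF: nonnegative, symmetric, normalized, satisfying the addition rule. -/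
def IsInfEPPF (p : List ℕ → ℝ) : Prop :=
  p [1] = 1 ∧
  (∀ c, IsComposition c → 0 ≤ p c) ∧
  (∀ c c', IsComposition c → List.Perm c c' → p c = p c') ∧
  ∀ c, IsComposition c →
    p c = p (c ++ [1]) + ∑ i ∈ Finset.range c.length, p (c.set i (c.getD i 0 + 1))

/-- `Φ(b:k)` for the `(Λ, ρ)`-coalescent with freeze. -/
noncomputable def coalPhiK (Λ : Measure (Set.Icc (0:ℝ) 1)) (ρ : ℝ) (b k : ℕ) : ℝ :=
  if k = 1 then ρ * b
  else (b.choose k : ℝ) * ∫ x, (x : ℝ) ^ (k - 2) * (1 - (x : ℝ)) ^ (b - k) ∂Λ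

/-- `Φ(b) = ∑_{k=1}^b Φ(b:k)`, the total rate. -/
noncomputable def coalPhi (Λ : Measure (Set.Icc (0:ℝ) 1)) (ρ : ℝ) (b : ℕ) : ℝ :=
  ∑ k ∈ Finset.Icc 1 b, coalPhiK Λ ρ b k

/-- Iterated backward difference `∇^j c (n) = ∑_{i=0}^j (-1)^i C(j,i) c(n+i)`. -/
def nablaIter (c : ℕ → ℝ) (j n : ℕ) : ℝ :=
  ∑ i ∈ Finset.range (j + 1), (-1 : ℝ) ^ i * (j.choose i : ℝ) * c (n + i)

/-- `Φ̄(n) = Φ(n) - ρ n`. -/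
noncomputable def phiBar (Φ : ℕ → ℝ) (ρ : ℝ) (n : ℕ) : ℝ := Φ n - ρ * n

/-- `Ψ(n) = ∇Φ̄(n) / n`. -/
noncomputable def psiOf (Φ : ℕ → ℝ) (ρ : ℝ) (n : ℕ) : ℝ :=
  (phiBar Φ ρ n - phiBar Φ ρ (n + 1)) / n

/-- `Φ(n:1) = ρ n` and `Φ(n:m) = -C(n,m) ∇^{m-2} Ψ (n-m+1)` for `m ≥ 2`. -/
noncomputable def phiNM (Φ : ℕ → ℝ) (ρ : ℝ) (n m : ℕ) : ℝ :=
  if m = 1 then ρ * n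
  else -(n.choose m : ℝ) * nablaIter (psiOf Φ ρ) (m - 2) (n - m + 1)

namespace LCR


noncomputable def ff (x : ℝ) (j : ℕ) : ℝ := ∏ i ∈ Finset.range j, (x - i)
lemma ff_zero (x : ℝ) : ff x 0 = 1 := by simp [ff]
lemma ff_succ (x : ℝ) (j : ℕ) : ff x (j + 1) = ff x j * (x - j) := Finset.prod_range_succ _ _
lemma ff_succ' (x : ℝ) (j : ℕ) : ff x (j + 1) = x * ff (x - 1) j := by
  rw [ff, Finset.prod_range_succ' (fun i => x - i) j]
  simp only [Nat.cast_zero, sub_zero, mul_comm]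
  congr 1
  exact Finset.prod_congr rfl fun i _ => by push_cast; ring
lemma ff_shift (x : ℝ) (j : ℕ) : (x - j) * ff x j = x * ff (x - 1) j := by
  rw [mul_comm, ← ff_succ, ff_succ']
lemma ff_nat_eq_zero {k j : ℕ} (h : k < j) : ff (k : ℝ) j = 0 :=
  Finset.prod_eq_zero (Finset.mem_range.2 h) (by simp)
lemma ff_nat_nonneg (k j : ℕ) : 0 ≤ ff (k : ℝ) j := by
  rcases lt_or_ge k j with h | h
  · rw [ff_nat_eq_zero h]
  · exact Finset.prod_nonneg fun i hi => by
      have : (i : ℝ) < k := by exact_mod_cast lt_of_lt_of_le (Finset.mem_range.1 hi) h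
      linarith
lemma ff_nat_pos {k j : ℕ} (h : j ≤ k) : 0 < ff (k : ℝ) j :=
  Finset.prod_pos fun i hi => by
    have : (i : ℝ) < k := by exact_mod_cast lt_of_lt_of_le (Finset.mem_range.1 hi) h
    linarith
lemma ff_nat_factorial (m : ℕ) : ff (m : ℝ) m = (m.factorial : ℝ) := by
  induction m with
  | zero => simp [ff]
  | succ n ih =>
      rw [ff_succ']
      push_cast
      rw [show ((n : ℝ) + 1 - 1) = (n : ℝ) by ring, ih, Nat.factorial_succ]
      push_cast
      ring
lemma ff_add (x : ℝ) (a b : ℕ) : ff x (a + b) = ff x a * ff (x - a) b := by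
  rw [ff, Finset.prod_range_add]
  congr 1
  exact Finset.prod_congr rfl fun i _ => by push_cast; ring

section
variable {l : ℕ → ℕ → ℝ}

theorem key_exact (hrec : ∀ b k, 2 ≤ k → k ≤ b → l b k = l (b + 1) k + l (b + 1) (k + 1))
    (r s : ℕ) : ∀ n, r + s ≤ n →
    ∑ k ∈ Finset.range (n + 1),
        (n.choose k : ℝ) * ff (k : ℝ) r * ff ((n - k : ℕ) : ℝ) s * l (n + 2) (k + 2)
      = ff (n : ℝ) (r + s) * l (r + s + 2) (r + 2) := by
  intro n hn
  induction n, hn using Nat.le_induction with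
  | base =>
      rw [Finset.sum_eq_single_of_mem r (Finset.mem_range.2 (by omega))]
      · have h1 : (r + s - r : ℕ) = s := by omega
        rw [h1, ff_nat_factorial, ff_nat_factorial, ff_nat_factorial]
        have h0 := Nat.choose_mul_factorial_mul_factorial (show r ≤ r + s by omega)
        rw [h1] at h0
        have h3 : ((r + s).choose r : ℝ) * (r.factorial : ℝ) * (s.factorial : ℝ)
            = ((r + s).factorial : ℝ) := by exact_mod_cast congrArg (Nat.cast (R := ℝ)) h0
        linear_combination l (r + s + 2) (r + 2) * h3
      · intro k hk hne
        rcases lt_or_gt_of_ne hne with h | h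
        · rw [ff_nat_eq_zero h]; ring
        · have : (r + s - k : ℕ) < s := by
            have := Finset.mem_range.1 hk; omega
          rw [ff_nat_eq_zero this]; ring
  | succ n hn ih =>
      set t := r + s with ht
      have hstep : ∀ k ∈ Finset.range (n + 2),
          ((n : ℝ) + 1 - r - s) * (((n + 1).choose k : ℕ) : ℝ) * ff (k : ℝ) r
              * ff ((n + 1 - k : ℕ) : ℝ) s * l (n + 3) (k + 2)
            = ((n : ℝ) + 1) * (n.choose k : ℝ) * ff (k : ℝ) r
                * ff ((n - k : ℕ) : ℝ) s * l (n + 3) (k + 2)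
              + (k : ℝ) * (((n + 1).choose k : ℕ) : ℝ) * ff ((k - 1 : ℕ) : ℝ) r
                * ff ((n + 1 - k : ℕ) : ℝ) s * l (n + 3) (k + 2) := by
        intro k hk
        have hk' : k ≤ n + 1 := by have := Finset.mem_range.1 hk; omega
        have hia : ((n : ℝ) + 1 - k - s) * (((n + 1).choose k : ℕ) : ℝ)
              * ff ((n + 1 - k : ℕ) : ℝ) s
            = ((n : ℝ) + 1) * (n.choose k : ℝ) * ff ((n - k : ℕ) : ℝ) s := by
          rcases eq_or_lt_of_le hk' with he | hlt
          · subst he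
            rw [show n.choose (n + 1) = 0 from Nat.choose_eq_zero_of_lt (by omega)]
            cases s with
            | zero => push_cast; ring
            | succ m =>
                rw [show (n + 1 - (n + 1) : ℕ) = 0 from by omega,
                  ff_nat_eq_zero (show (0:ℕ) < m + 1 by omega)]
                push_cast; ring
          · have hkn : k ≤ n := by omega
            have c1 : ((n + 1 - k : ℕ) : ℝ) = (n : ℝ) + 1 - k := by
              push_cast [Nat.cast_sub (by omega : k ≤ n + 1)]; ring
            have c2 : ((n - k : ℕ) : ℝ) = (n : ℝ) - k := by
              push_cast [Nat.cast_sub hkn]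
              ring
            have hch : (((n + 1).choose k : ℕ) : ℝ) * ((n : ℝ) + 1 - k)
                = ((n : ℝ) + 1) * (n.choose k : ℝ) := by
              have h2 : ((n.choose k : ℕ) : ℝ) * ((n : ℝ) + 1)
                  = (((n + 1).choose k : ℕ) : ℝ) * ((n + 1 - k : ℕ) : ℝ) := by
                exact_mod_cast congrArg (Nat.cast (R := ℝ)) (Nat.choose_mul_succ_eq n k)
              rw [c1] at h2
              linarith
            have hsh := ff_shift ((n : ℝ) + 1 - k) s
            have harg : (n : ℝ) + 1 - k - 1 = (n : ℝ) - k := by ring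
            rw [harg] at hsh
            rw [c1, c2]
            linear_combination (((n + 1).choose k : ℕ) : ℝ) * hsh
              + ff ((n : ℝ) - k) s * hch
        have hib : ((k : ℝ) - r) * ff (k : ℝ) r = (k : ℝ) * ff ((k - 1 : ℕ) : ℝ) r := by
          cases k with
          | zero =>
              cases r with
              | zero => simp [ff_zero]
              | succ m => rw [ff_nat_eq_zero (by omega)]; simp
          | succ m =>
              have c3 : ((m + 1 - 1 : ℕ) : ℝ) = ((m + 1 : ℕ) : ℝ) - 1 := by push_cast; ring
              rw [c3]
              exact ff_shift _ r
        linear_combination (l (n + 3) (k + 2) * ff (k : ℝ) r) * hia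
          + (l (n + 3) (k + 2) * (((n + 1).choose k : ℕ) : ℝ) * ff ((n + 1 - k : ℕ) : ℝ) s) * hib
      set L := l (t + 2) (r + 2) with hL
      have hT : ∑ k ∈ Finset.range (n + 1),
            (n.choose k : ℝ) * ff (k : ℝ) r * ff ((n - k : ℕ) : ℝ) s * l (n + 3) (k + 2)
          + ∑ k ∈ Finset.range (n + 1),
            (n.choose k : ℝ) * ff (k : ℝ) r * ff ((n - k : ℕ) : ℝ) s * l (n + 3) (k + 3)
          = ff (n : ℝ) t * L := by
        rw [← Finset.sum_add_distrib, ← ih]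
        refine Finset.sum_congr rfl fun k hk => ?_
        have hk' : k ≤ n := by have := Finset.mem_range.1 hk; omega
        rw [hrec (n + 2) (k + 2) (by omega) (by omega)]
        ring
      have hB0 : ∑ k ∈ Finset.range (n + 2),
            (k : ℝ) * (((n + 1).choose k : ℕ) : ℝ) * ff ((k - 1 : ℕ) : ℝ) r
              * ff ((n + 1 - k : ℕ) : ℝ) s * l (n + 3) (k + 2)
          = ((n : ℝ) + 1) * ∑ k ∈ Finset.range (n + 1),
            (n.choose k : ℝ) * ff (k : ℝ) r * ff ((n - k : ℕ) : ℝ) s * l (n + 3) (k + 3) := by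
        rw [Finset.sum_range_succ' _ (n + 1), Finset.mul_sum]
        simp only [Nat.cast_zero, zero_mul, add_zero]
        refine Finset.sum_congr rfl fun i hi => ?_
        have h1 : (i + 1 - 1 : ℕ) = i := by omega
        have h2 : (n + 1 - (i + 1) : ℕ) = (n - i : ℕ) := by omega
        have hnat : (i + 1) * ((n + 1).choose (i + 1)) = (n + 1) * n.choose i := by
          rw [mul_comm]
          exact (Nat.add_one_mul_choose_eq n i).symm
        have h3 : ((i : ℝ) + 1) * (((n + 1).choose (i + 1) : ℕ) : ℝ)
            = ((n : ℝ) + 1) * (n.choose i : ℝ) := by exact_mod_cast congrArg (Nat.cast (R := ℝ)) hnat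
        rw [h1, h2, show i + 1 + 2 = i + 3 by omega]
        push_cast
        linear_combination (ff (i : ℝ) r * ff ((n - i : ℕ) : ℝ) s * l (n + 3) (i + 3)) * h3
      have hA : ((n : ℝ) + 1 - r - s) * ∑ k ∈ Finset.range (n + 2),
            (((n + 1).choose k : ℕ) : ℝ) * ff (k : ℝ) r * ff ((n + 1 - k : ℕ) : ℝ) s
              * l (n + 3) (k + 2)
          = ((n : ℝ) + 1) * (ff (n : ℝ) t * L) := by
        rw [Finset.mul_sum]
        have e1 : ∑ k ∈ Finset.range (n + 2), ((n : ℝ) + 1 - r - s)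
              * ((((n + 1).choose k : ℕ) : ℝ) * ff (k : ℝ) r * ff ((n + 1 - k : ℕ) : ℝ) s
                * l (n + 3) (k + 2))
            = ∑ k ∈ Finset.range (n + 2),
              (((n : ℝ) + 1) * (n.choose k : ℝ) * ff (k : ℝ) r
                  * ff ((n - k : ℕ) : ℝ) s * l (n + 3) (k + 2)
                + (k : ℝ) * (((n + 1).choose k : ℕ) : ℝ) * ff ((k - 1 : ℕ) : ℝ) r
                  * ff ((n + 1 - k : ℕ) : ℝ) s * l (n + 3) (k + 2)) := by
          refine Finset.sum_congr rfl fun k hk => ?_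
          have := hstep k hk
          linarith [this]
        rw [e1, Finset.sum_add_distrib, hB0]
        have e2 : ∑ k ∈ Finset.range (n + 2),
              ((n : ℝ) + 1) * (n.choose k : ℝ) * ff (k : ℝ) r * ff ((n - k : ℕ) : ℝ) s
                * l (n + 3) (k + 2)
            = ((n : ℝ) + 1) * ∑ k ∈ Finset.range (n + 1),
              (n.choose k : ℝ) * ff (k : ℝ) r * ff ((n - k : ℕ) : ℝ) s * l (n + 3) (k + 2) := by
          rw [Finset.sum_range_succ, Nat.choose_eq_zero_of_lt (by omega : n < n + 1)]
          rw [Finset.mul_sum]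
          simp only [Nat.cast_zero, zero_mul, mul_zero, add_zero]
          exact Finset.sum_congr rfl fun k hk => by ring
        rw [e2, ← mul_add, hT]
      have hc0 : ((n : ℝ) + 1 - r - s) ≠ 0 := by
        have h1 : ((r : ℝ) + s) ≤ (n : ℝ) := by exact_mod_cast hn
        intro h; rw [ht] at *; linarith
      have hff := ff_shift ((n : ℝ) + 1) t
      rw [show (n : ℝ) + 1 - 1 = (n : ℝ) by ring] at hff
      have hcast : (((n + 1 : ℕ)) : ℝ) = (n : ℝ) + 1 := by push_cast; ring
      rw [hcast]
      apply mul_left_cancel₀ hc0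
      have htr : ((t : ℕ) : ℝ) = (r : ℝ) + s := by rw [ht]; push_cast; ring
      rw [htr] at hff
      linear_combination hA - L * hff
end

/-- product comparison estimate -/
lemma prod_est (m : ℕ) (u v : ℕ → ℝ) (δ : ℝ) (hδ : 0 ≤ δ)
    (hu : ∀ i ∈ Finset.range m, 0 ≤ u i ∧ u i ≤ 1)
    (hv : ∀ i ∈ Finset.range m, 0 ≤ v i ∧ v i ≤ 1)
    (hd : ∀ i ∈ Finset.range m, |u i - v i| ≤ δ) :
    |∏ i ∈ Finset.range m, u i - ∏ i ∈ Finset.range m, v i| ≤ m * δ := by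
  induction m with
  | zero => simp
  | succ m ih =>
      have hu' : ∀ i ∈ Finset.range m, 0 ≤ u i ∧ u i ≤ 1 := fun i hi =>
        hu i (Finset.mem_range.2 (by have := Finset.mem_range.1 hi; omega))
      have hv' : ∀ i ∈ Finset.range m, 0 ≤ v i ∧ v i ≤ 1 := fun i hi =>
        hv i (Finset.mem_range.2 (by have := Finset.mem_range.1 hi; omega))
      have hd' : ∀ i ∈ Finset.range m, |u i - v i| ≤ δ := fun i hi =>
        hd i (Finset.mem_range.2 (by have := Finset.mem_range.1 hi; omega))
      have IH := ih hu' hv' hd'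
      rw [Finset.prod_range_succ, Finset.prod_range_succ]
      have hm : m ∈ Finset.range (m + 1) := Finset.mem_range.2 (by omega)
      have hPu0 : 0 ≤ ∏ i ∈ Finset.range m, u i := Finset.prod_nonneg fun i hi => (hu' i hi).1
      have hPu1 : (∏ i ∈ Finset.range m, u i) ≤ 1 :=
        Finset.prod_le_one (fun i hi => (hu' i hi).1) (fun i hi => (hu' i hi).2)
      have hv0 : 0 ≤ v m := (hv m hm).1
      have hv1 : v m ≤ 1 := (hv m hm).2
      have key : (∏ i ∈ Finset.range m, u i) * u m - (∏ i ∈ Finset.range m, v i) * v m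
          = ((∏ i ∈ Finset.range m, u i) - ∏ i ∈ Finset.range m, v i) * v m
            + (∏ i ∈ Finset.range m, u i) * (u m - v m) := by ring
      rw [key]
      calc |_ + _| ≤ |((∏ i ∈ Finset.range m, u i) - ∏ i ∈ Finset.range m, v i) * v m|
            + |(∏ i ∈ Finset.range m, u i) * (u m - v m)| := abs_add_le _ _
        _ ≤ (m * δ) * 1 + 1 * δ := by
            rw [abs_mul, abs_mul]
            have h1 : |v m| ≤ 1 := by rw [abs_of_nonneg hv0]; exact hv1
            have h2 : |∏ i ∈ Finset.range m, u i| ≤ 1 := by rw [abs_of_nonneg hPu0]; exact hPu1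
            have h4 := mul_le_mul IH h1 (abs_nonneg _) (by positivity)
            have h5 := mul_le_mul h2 (hd m hm) (abs_nonneg _) (by norm_num)
            linarith
        _ = (m + 1 : ℕ) * δ := by push_cast; ring

lemma pointwise_est (r s n k : ℕ) (hn : 2 * (r + s) + 1 ≤ n) (hk : k ≤ n) :
    |((k : ℝ) / n) ^ r * (((n - k : ℕ) : ℝ) / n) ^ s
        - ff (k : ℝ) r * ff ((n - k : ℕ) : ℝ) s / ff (n : ℝ) (r + s)|
      ≤ (4 * ((r + s : ℕ) : ℝ) ^ 2 + ((r + s : ℕ) : ℝ)) / n := by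
  have hn0 : (0 : ℝ) < n := by
    have : (1 : ℕ) ≤ n := by omega
    exact_mod_cast Nat.lt_of_lt_of_le Nat.zero_lt_one this
  have hc : ((n - k : ℕ) : ℝ) = (n : ℝ) - k := by
    push_cast [Nat.cast_sub hk]; ring
  have hkn : (k : ℝ) ≤ n := by exact_mod_cast hk
  have hx0 : (0 : ℝ) ≤ (k : ℝ) / n := by positivity
  have hx1 : (k : ℝ) / n ≤ 1 := by rw [div_le_one hn0]; exact hkn
  have hy0 : (0 : ℝ) ≤ ((n - k : ℕ) : ℝ) / n := by positivity
  have hy1 : ((n - k : ℕ) : ℝ) / n ≤ 1 := by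
    rw [div_le_one hn0, hc]; linarith [Nat.cast_nonneg (α := ℝ) k]
  have htR : ((r + s : ℕ) : ℝ) = (r : ℝ) + s := by push_cast; ring
  have htn : ((r + s : ℕ) : ℝ) ≤ n := by
    have : (r + s : ℕ) ≤ n := by omega
    exact_mod_cast this
  have habs : ∀ x : ℝ, 0 ≤ x → x ≤ ((r + s : ℕ) : ℝ) / n →
      x ≤ (4 * ((r + s : ℕ) : ℝ) ^ 2 + ((r + s : ℕ) : ℝ)) / n := by
    intro x _ hx2
    refine le_trans hx2 ?_
    gcongr
    nlinarith [sq_nonneg ((r + s : ℕ) : ℝ)]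
  rcases lt_or_ge k r with hkr | hrk
  · -- k < r : falling factorial side vanishes
    rw [ff_nat_eq_zero hkr, zero_mul, zero_div, sub_zero, abs_of_nonneg (by positivity)]
    have hr1 : 1 ≤ r := by omega
    refine habs _ (by positivity) ?_
    have h5 : (k : ℝ) ≤ ((r + s : ℕ) : ℝ) := by exact_mod_cast (by omega : k ≤ r + s)
    calc ((k : ℝ) / n) ^ r * (((n - k : ℕ) : ℝ) / n) ^ s
        ≤ ((k : ℝ) / n) ^ r * 1 :=
          mul_le_mul_of_nonneg_left (pow_le_one₀ hy0 hy1) (pow_nonneg hx0 r)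
      _ = ((k : ℝ) / n) ^ r := mul_one _
      _ ≤ (k : ℝ) / n := by simpa using pow_le_pow_of_le_one hx0 hx1 hr1
      _ ≤ ((r + s : ℕ) : ℝ) / n := by gcongr
  rcases lt_or_ge (n - k) s with hks | hsk
  · -- n - k < s
    rw [ff_nat_eq_zero hks, mul_zero, zero_div, sub_zero, abs_of_nonneg (by positivity)]
    have hs1 : 1 ≤ s := by omega
    refine habs _ (by positivity) ?_
    have h5 : ((n - k : ℕ) : ℝ) ≤ ((r + s : ℕ) : ℝ) := by
      exact_mod_cast (by omega : n - k ≤ r + s)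
    calc ((k : ℝ) / n) ^ r * (((n - k : ℕ) : ℝ) / n) ^ s
        ≤ 1 * (((n - k : ℕ) : ℝ) / n) ^ s :=
          mul_le_mul_of_nonneg_right (pow_le_one₀ hx0 hx1) (pow_nonneg hy0 s)
      _ = (((n - k : ℕ) : ℝ) / n) ^ s := one_mul _
      _ ≤ ((n - k : ℕ) : ℝ) / n := by simpa using pow_le_pow_of_le_one hy0 hy1 hs1
      _ ≤ ((r + s : ℕ) : ℝ) / n := by gcongr
  · -- main case : r ≤ k, s ≤ n - k
    have t0 : (0 : ℝ) ≤ ((r + s : ℕ) : ℝ) := Nat.cast_nonneg _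
    have h2t : 2 * ((r + s : ℕ) : ℝ) + 1 ≤ (n : ℝ) := by
      have : ((2 * (r + s) + 1 : ℕ) : ℝ) ≤ (n : ℝ) := by exact_mod_cast hn
      push_cast at this; linarith
    have hs_le : (s : ℝ) ≤ (n : ℝ) - k := by
      have : ((s : ℕ) : ℝ) ≤ ((n - k : ℕ) : ℝ) := by exact_mod_cast hsk
      rw [hc] at this; exact this
    have hr_le : (r : ℝ) ≤ (k : ℝ) := by exact_mod_cast hrk
    set u : ℕ → ℝ := fun i => if i < r then (k : ℝ) / n else ((n - k : ℕ) : ℝ) / n with hu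
    set v : ℕ → ℝ := fun i =>
      if i < r then ((k : ℝ) - i) / ((n : ℝ) - i)
      else ((n : ℝ) - k - ((i - r : ℕ) : ℝ)) / ((n : ℝ) - i) with hv
    have hPu : ∏ i ∈ Finset.range (r + s), u i
        = ((k : ℝ) / n) ^ r * (((n - k : ℕ) : ℝ) / n) ^ s := by
      rw [Finset.prod_range_add]
      congr 1
      · have h : ∀ i ∈ Finset.range r, u i = (k : ℝ) / n := fun i hi => by
          simp only [hu]; rw [if_pos (Finset.mem_range.1 hi)]
        rw [Finset.prod_congr rfl h, Finset.prod_const, Finset.card_range]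
      · have h : ∀ i ∈ Finset.range s, u (r + i) = ((n - k : ℕ) : ℝ) / n := fun i hi => by
          simp only [hu]; rw [if_neg (by omega)]
        rw [Finset.prod_congr rfl h, Finset.prod_const, Finset.card_range]
    have hPv : ∏ i ∈ Finset.range (r + s), v i
        = ff (k : ℝ) r * ff ((n - k : ℕ) : ℝ) s / ff (n : ℝ) (r + s) := by
      rw [Finset.prod_range_add]
      have e1 : ∏ i ∈ Finset.range r, v i = ff (k : ℝ) r / ff (n : ℝ) r := by
        have h : ∀ i ∈ Finset.range r, v i = ((k : ℝ) - i) / ((n : ℝ) - i) := fun i hi => by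
          simp only [hv]; rw [if_pos (Finset.mem_range.1 hi)]
        rw [Finset.prod_congr rfl h, Finset.prod_div_distrib]; rfl
      have e2 : ∏ i ∈ Finset.range s, v (r + i)
          = ff ((n - k : ℕ) : ℝ) s / ff ((n : ℝ) - r) s := by
        have h : ∀ i ∈ Finset.range s, v (r + i)
            = (((n - k : ℕ) : ℝ) - i) / (((n : ℝ) - r) - i) := by
          intro i hi
          simp only [hv]
          rw [if_neg (by omega)]
          have hj : ((r + i - r : ℕ) : ℝ) = (i : ℝ) := by
            norm_cast; omega
          rw [hj, hc]
          congr 1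
          push_cast; ring
        rw [Finset.prod_congr rfl h, Finset.prod_div_distrib]; rfl
      rw [e1, e2, div_mul_div_comm]
      congr 1
      rw [ff_add]
    have hubd : ∀ i ∈ Finset.range (r + s), 0 ≤ u i ∧ u i ≤ 1 := by
      intro i _
      by_cases h : i < r
      · simp only [hu]; rw [if_pos h]; exact ⟨hx0, hx1⟩
      · simp only [hu]; rw [if_neg h]; exact ⟨hy0, hy1⟩
    have hidenom : ∀ i ∈ Finset.range (r + s), (0 : ℝ) < (n : ℝ) - i := by
      intro i hi
      have : (i : ℝ) + 1 ≤ ((r + s : ℕ) : ℝ) := by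
        exact_mod_cast Finset.mem_range.1 hi
      linarith
    have hit : ∀ i ∈ Finset.range (r + s), (i : ℝ) ≤ ((r + s : ℕ) : ℝ) := by
      intro i hi
      have : (i : ℝ) + 1 ≤ ((r + s : ℕ) : ℝ) := by exact_mod_cast Finset.mem_range.1 hi
      linarith
    have hvbd : ∀ i ∈ Finset.range (r + s), 0 ≤ v i ∧ v i ≤ 1 := by
      intro i hi
      have hd := hidenom i hi
      by_cases h : i < r <;> simp only [hv]
      · rw [if_pos h]
        have hik : (i : ℝ) ≤ k := by
          have : (i : ℝ) < r := by exact_mod_cast h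
          linarith
        constructor
        · apply div_nonneg (by linarith) (by linarith)
        · rw [div_le_one hd]; linarith
      · rw [if_neg h]
        have hjcast : ((i - r : ℕ) : ℝ) = (i : ℝ) - r := by
          have : r ≤ i := by omega
          push_cast [Nat.cast_sub this]; ring
        have hjs : (i : ℝ) - r ≤ (s : ℝ) - 1 := by
          have h1 : (i : ℝ) + 1 ≤ ((r + s : ℕ) : ℝ) := by
            exact_mod_cast Finset.mem_range.1 hi
          rw [htR] at h1; linarith
        rw [hjcast]
        constructor
        · apply div_nonneg (by linarith) (by linarith)
        · rw [div_le_one hd]; linarith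
    have hdbd : ∀ i ∈ Finset.range (r + s),
        |u i - v i| ≤ 4 * ((r + s : ℕ) : ℝ) / n := by
      intro i hi
      have hd := hidenom i hi
      have f1 := hit i hi
      by_cases h : i < r <;> simp only [hu, hv]
      · rw [if_pos h, if_pos h]
        have heq : (k : ℝ) / n - ((k : ℝ) - i) / ((n : ℝ) - i)
            = ((i : ℝ) * ((n : ℝ) - k)) / ((n : ℝ) * ((n : ℝ) - i)) := by
          field_simp
          ring
        rw [heq, abs_of_nonneg (div_nonneg
          (mul_nonneg (Nat.cast_nonneg _) (by linarith)) (by positivity))]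
        rw [div_le_div_iff₀ (by positivity) hn0]
        have g1 : (i : ℝ) * ((n : ℝ) - k) ≤ ((r + s : ℕ) : ℝ) * n :=
          mul_le_mul f1 (by linarith [Nat.cast_nonneg (α := ℝ) k]) (by linarith) t0
        nlinarith [mul_nonneg (mul_nonneg t0 hn0.le)
          (show (0 : ℝ) ≤ 4 * ((n : ℝ) - i) - n by linarith), mul_le_mul_of_nonneg_right g1 hn0.le]
      · rw [if_neg h, if_neg h]
        have hjcast : ((i - r : ℕ) : ℝ) = (i : ℝ) - r := by
          have : r ≤ i := by omega
          push_cast [Nat.cast_sub this]; ring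
        rw [hjcast, hc]
        have heq : ((n : ℝ) - k) / n - ((n : ℝ) - k - ((i : ℝ) - r)) / ((n : ℝ) - i)
            = ((i : ℝ) * k - (n : ℝ) * r) / ((n : ℝ) * ((n : ℝ) - i)) := by
          field_simp
          ring
        rw [heq, abs_div, abs_of_pos (mul_pos hn0 hd)]
        have g1 : (i : ℝ) * k ≤ ((r + s : ℕ) : ℝ) * n :=
          mul_le_mul f1 hkn (Nat.cast_nonneg _) t0
        have g2 : (n : ℝ) * r ≤ (n : ℝ) * ((r + s : ℕ) : ℝ) := by
          apply mul_le_mul_of_nonneg_left ?_ hn0.le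
          rw [htR]; linarith [Nat.cast_nonneg (α := ℝ) s]
        have g3 : |(i : ℝ) * k - (n : ℝ) * r| ≤ 2 * ((r + s : ℕ) : ℝ) * n := by
          rw [abs_le]
          constructor
          · nlinarith [mul_nonneg (Nat.cast_nonneg (α := ℝ) i) (Nat.cast_nonneg (α := ℝ) k)]
          · nlinarith [mul_nonneg hn0.le (Nat.cast_nonneg (α := ℝ) r)]
        rw [div_le_div_iff₀ (by positivity) hn0]
        nlinarith [mul_nonneg (mul_nonneg t0 hn0.le)
          (show (0 : ℝ) ≤ 2 * ((n : ℝ) - i) - n by linarith),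
          mul_le_mul_of_nonneg_right g3 hn0.le]
    have hfinal := prod_est (r + s) u v (4 * ((r + s : ℕ) : ℝ) / n) (by positivity)
      hubd hvbd hdbd
    rw [hPu, hPv] at hfinal
    refine le_trans hfinal ?_
    have e3 : ((r + s : ℕ) : ℝ) * (4 * ((r + s : ℕ) : ℝ) / n)
        = 4 * ((r + s : ℕ) : ℝ) ^ 2 / n := by ring
    rw [e3]
    gcongr
    linarith [t0]

theorem approx_tendsto {l : ℕ → ℕ → ℝ}
    (hnn : ∀ b k, 2 ≤ k → k ≤ b → 0 ≤ l b k)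
    (hrec : ∀ b k, 2 ≤ k → k ≤ b → l b k = l (b + 1) k + l (b + 1) (k + 1)) (r s : ℕ) :
    Filter.Tendsto (fun n : ℕ => ∑ k ∈ Finset.range (n + 1),
        (n.choose k : ℝ) * ((k : ℝ) / n) ^ r * (((n - k : ℕ) : ℝ) / n) ^ s * l (n + 2) (k + 2))
      Filter.atTop (nhds (l (r + s + 2) (r + 2))) := by
  have hmass : ∀ n : ℕ,
      ∑ k ∈ Finset.range (n + 1), (n.choose k : ℝ) * l (n + 2) (k + 2) = l 2 2 := by
    intro n
    have h := key_exact hrec 0 0 n (by omega)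
    simpa [ff_zero] using h
  have hkey : ∀ n : ℕ, 2 * (r + s) + 1 ≤ n →
      |(∑ k ∈ Finset.range (n + 1),
          (n.choose k : ℝ) * ((k : ℝ) / n) ^ r * (((n - k : ℕ) : ℝ) / n) ^ s * l (n + 2) (k + 2))
        - l (r + s + 2) (r + 2)|
      ≤ (4 * ((r + s : ℕ) : ℝ) ^ 2 + ((r + s : ℕ) : ℝ)) * l 2 2 / n := by
    intro n hn
    have hn0 : (0 : ℝ) < n := by
      have : (1 : ℕ) ≤ n := by omega
      exact_mod_cast Nat.lt_of_lt_of_le Nat.zero_lt_one this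
    have hffpos : (0 : ℝ) < ff (n : ℝ) (r + s) := ff_nat_pos (by omega)
    have hBsum : ∑ k ∈ Finset.range (n + 1),
        (n.choose k : ℝ) * (ff (k : ℝ) r * ff ((n - k : ℕ) : ℝ) s / ff (n : ℝ) (r + s))
          * l (n + 2) (k + 2) = l (r + s + 2) (r + 2) := by
      have h := key_exact hrec r s n (by omega)
      calc ∑ k ∈ Finset.range (n + 1),
            (n.choose k : ℝ) * (ff (k : ℝ) r * ff ((n - k : ℕ) : ℝ) s / ff (n : ℝ) (r + s))
              * l (n + 2) (k + 2)
          = (∑ k ∈ Finset.range (n + 1),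
              (n.choose k : ℝ) * ff (k : ℝ) r * ff ((n - k : ℕ) : ℝ) s * l (n + 2) (k + 2))
            / ff (n : ℝ) (r + s) := by
            rw [Finset.sum_div]; exact Finset.sum_congr rfl fun k _ => by ring
        _ = l (r + s + 2) (r + 2) := by rw [h]; field_simp
    have hdiff : (∑ k ∈ Finset.range (n + 1),
          (n.choose k : ℝ) * ((k : ℝ) / n) ^ r * (((n - k : ℕ) : ℝ) / n) ^ s * l (n + 2) (k + 2))
        - l (r + s + 2) (r + 2)
        = ∑ k ∈ Finset.range (n + 1), (n.choose k : ℝ)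
            * (((k : ℝ) / n) ^ r * (((n - k : ℕ) : ℝ) / n) ^ s
              - ff (k : ℝ) r * ff ((n - k : ℕ) : ℝ) s / ff (n : ℝ) (r + s))
            * l (n + 2) (k + 2) := by
      rw [← hBsum, ← Finset.sum_sub_distrib]
      exact Finset.sum_congr rfl fun k _ => by ring
    rw [hdiff]
    calc |∑ k ∈ Finset.range (n + 1), (n.choose k : ℝ)
            * (((k : ℝ) / n) ^ r * (((n - k : ℕ) : ℝ) / n) ^ s
              - ff (k : ℝ) r * ff ((n - k : ℕ) : ℝ) s / ff (n : ℝ) (r + s))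
            * l (n + 2) (k + 2)|
        ≤ ∑ k ∈ Finset.range (n + 1), |(n.choose k : ℝ)
            * (((k : ℝ) / n) ^ r * (((n - k : ℕ) : ℝ) / n) ^ s
              - ff (k : ℝ) r * ff ((n - k : ℕ) : ℝ) s / ff (n : ℝ) (r + s))
            * l (n + 2) (k + 2)| := Finset.abs_sum_le_sum_abs _ _
      _ ≤ ∑ k ∈ Finset.range (n + 1), (n.choose k : ℝ)
            * ((4 * ((r + s : ℕ) : ℝ) ^ 2 + ((r + s : ℕ) : ℝ)) / n) * l (n + 2) (k + 2) := by
          refine Finset.sum_le_sum fun k hk => ?_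
          have hkn : k ≤ n := by have := Finset.mem_range.1 hk; omega
          have hl0 : 0 ≤ l (n + 2) (k + 2) := hnn (n + 2) (k + 2) (by omega) (by omega)
          rw [abs_mul, abs_mul, abs_of_nonneg (by positivity : (0:ℝ) ≤ (n.choose k : ℝ)),
            abs_of_nonneg hl0]
          have hpt := pointwise_est r s n k hn hkn
          have := mul_le_mul_of_nonneg_left hpt (by positivity : (0:ℝ) ≤ (n.choose k : ℝ))
          exact mul_le_mul_of_nonneg_right this hl0
      _ = ((4 * ((r + s : ℕ) : ℝ) ^ 2 + ((r + s : ℕ) : ℝ)) / n)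
            * ∑ k ∈ Finset.range (n + 1), (n.choose k : ℝ) * l (n + 2) (k + 2) := by
          rw [Finset.mul_sum]; exact Finset.sum_congr rfl fun k _ => by ring
      _ = (4 * ((r + s : ℕ) : ℝ) ^ 2 + ((r + s : ℕ) : ℝ)) * l 2 2 / n := by
          rw [hmass n]; ring
  rw [tendsto_iff_dist_tendsto_zero]
  refine squeeze_zero'
    (g := fun n : ℕ => (4 * ((r + s : ℕ) : ℝ) ^ 2 + ((r + s : ℕ) : ℝ)) * l 2 2 / n)
    (Filter.Eventually.of_forall fun n => dist_nonneg) ?_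
    (tendsto_const_div_atTop_nhds_zero_nat _)
  filter_upwards [Filter.eventually_ge_atTop (2 * (r + s) + 1)] with n hn
  rw [Real.dist_eq]
  exact hkey n hn

section
variable {l : ℕ → ℕ → ℝ}

lemma l_le_c0 (hnn : ∀ b k, 2 ≤ k → k ≤ b → 0 ≤ l b k)
    (hrec : ∀ b k, 2 ≤ k → k ≤ b → l b k = l (b + 1) k + l (b + 1) (k + 1)) :
    ∀ b k, 2 ≤ k → k ≤ b → l b k ≤ l 2 2 := by
  intro b
  induction b with
  | zero => intro k h1 h2; omega
  | succ b ih =>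
      intro k hk2 hkb
      rcases Nat.lt_or_ge k (b + 1) with h | h
      · have hkb' : k ≤ b := by omega
        have h1 := hrec b k hk2 hkb'
        have h2 := hnn (b + 1) (k + 1) (by omega) (by omega)
        have h3 := ih k hk2 hkb'
        linarith
      · have hk : k = b + 1 := by omega
        subst hk
        rcases Nat.lt_or_ge b 2 with hb | hb
        · have hb1 : b = 1 := by omega
          subst hb1; exact le_refl _
        · have h1 := hrec b b hb le_rfl
          have h2 := hnn (b + 1) b (by omega) (by omega)
          have h3 := ih b hb le_rfl
          linarith

end

/-- Empirical CDF-type functions built from the array. -/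
noncomputable def Fn (l : ℕ → ℕ → ℝ) (n : ℕ) (x : ℝ) : ℝ :=
  ∑ k ∈ Finset.range (n + 2), ((n + 1).choose k : ℝ) * l (n + 3) (k + 2)
    * (Set.Ici ((k : ℝ) / (n + 1))).indicator (fun _ => (1 : ℝ)) x

section
variable {l : ℕ → ℕ → ℝ}

lemma Fn_term_nonneg (hnn : ∀ b k, 2 ≤ k → k ≤ b → 0 ≤ l b k) (n k : ℕ) (hk : k ∈ Finset.range (n + 2)) :
    0 ≤ ((n + 1).choose k : ℝ) * l (n + 3) (k + 2) := by
  have := hnn (n + 3) (k + 2) (by omega) (by have := Finset.mem_range.1 hk; omega)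
  positivity

lemma Fn_mono (hnn : ∀ b k, 2 ≤ k → k ≤ b → 0 ≤ l b k) (n : ℕ) : Monotone (Fn l n) := by
  intro x y hxy
  refine Finset.sum_le_sum fun k hk => ?_
  refine mul_le_mul_of_nonneg_left ?_ (Fn_term_nonneg hnn n k hk)
  by_cases hx : x ∈ Set.Ici ((k : ℝ) / (n + 1))
  · rw [Set.indicator_of_mem hx,
      Set.indicator_of_mem (show y ∈ Set.Ici ((k : ℝ) / (n + 1)) from le_trans hx hxy)]
  · rw [Set.indicator_of_notMem hx]
    exact Set.indicator_nonneg (fun _ _ => zero_le_one) y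

lemma Fn_nonneg (hnn : ∀ b k, 2 ≤ k → k ≤ b → 0 ≤ l b k) (n : ℕ) (x : ℝ) : 0 ≤ Fn l n x :=
  Finset.sum_nonneg fun k hk => mul_nonneg (Fn_term_nonneg hnn n k hk)
    (Set.indicator_nonneg (fun _ _ => zero_le_one) x)

lemma Fn_mass (hrec : ∀ b k, 2 ≤ k → k ≤ b → l b k = l (b + 1) k + l (b + 1) (k + 1)) (n : ℕ) :
    ∑ k ∈ Finset.range (n + 2), ((n + 1).choose k : ℝ) * l (n + 3) (k + 2) = l 2 2 := by
  have h := key_exact hrec 0 0 (n + 1) (by omega)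
  simpa [ff_zero, show n + 1 + 2 = n + 3 from rfl] using h

lemma Fn_le_c0 (hnn : ∀ b k, 2 ≤ k → k ≤ b → 0 ≤ l b k)
    (hrec : ∀ b k, 2 ≤ k → k ≤ b → l b k = l (b + 1) k + l (b + 1) (k + 1)) (n : ℕ) (x : ℝ) : Fn l n x ≤ l 2 2 := by
  rw [← Fn_mass hrec n]
  refine Finset.sum_le_sum fun k hk => ?_
  have h1 : (Set.Ici ((k : ℝ) / (n + 1))).indicator (fun _ => (1 : ℝ)) x ≤ 1 := by
    by_cases hx : x ∈ Set.Ici ((k : ℝ) / (n + 1))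
    · rw [Set.indicator_of_mem hx]
    · rw [Set.indicator_of_notMem hx]; exact zero_le_one
  calc ((n + 1).choose k : ℝ) * l (n + 3) (k + 2)
        * (Set.Ici ((k : ℝ) / (n + 1))).indicator (fun _ => (1 : ℝ)) x
      ≤ ((n + 1).choose k : ℝ) * l (n + 3) (k + 2) * 1 :=
        mul_le_mul_of_nonneg_left h1 (Fn_term_nonneg hnn n k hk)
    _ = ((n + 1).choose k : ℝ) * l (n + 3) (k + 2) := mul_one _

lemma Fn_of_neg (n : ℕ) {x : ℝ} (hx : x < 0) : Fn l n x = 0 := by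
  rw [Fn]
  refine Finset.sum_eq_zero fun k hk => ?_
  rw [Set.indicator_of_notMem, mul_zero]
  intro hmem
  have : (0 : ℝ) ≤ (k : ℝ) / (n + 1) := by positivity
  exact absurd (le_trans this hmem) (not_le.2 hx)

lemma Fn_of_ge_one (hrec : ∀ b k, 2 ≤ k → k ≤ b → l b k = l (b + 1) k + l (b + 1) (k + 1)) (n : ℕ) {x : ℝ} (hx : (1 : ℝ) ≤ x) : Fn l n x = l 2 2 := by
  rw [Fn, ← Fn_mass hrec n]
  refine Finset.sum_congr rfl fun k hk => ?_
  have hk' : (k : ℝ) ≤ (n : ℝ) + 1 := by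
    have := Finset.mem_range.1 hk
    exact_mod_cast (by omega : k ≤ n + 1)
  have hmem : x ∈ Set.Ici ((k : ℝ) / (n + 1)) := by
    have h1 : (k : ℝ) / (n + 1) ≤ 1 := by
      rw [div_le_one (by positivity)]
      exact hk'
    exact le_trans h1 hx
  rw [Set.indicator_of_mem hmem]
  ring

lemma Fn_measurable (hnn : ∀ b k, 2 ≤ k → k ≤ b → 0 ≤ l b k) (n : ℕ) :
    Measurable (Fn l n) := (Fn_mono hnn n).measurable

end

open MeasureTheory in
lemma Fn_integral {l : ℕ → ℕ → ℝ}
    (hnn : ∀ b k, 2 ≤ k → k ≤ b → 0 ≤ l b k)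
    (hrec : ∀ b k, 2 ≤ k → k ≤ b → l b k = l (b + 1) k + l (b + 1) (k + 1))
    (P : Polynomial ℝ) (n : ℕ) :
    ∫ t in Set.Ioc (0 : ℝ) 1, (Polynomial.derivative P).eval t * Fn l n t
      = Polynomial.eval 1 P * l 2 2
        - ∑ k ∈ Finset.range (n + 2), ((n + 1).choose k : ℝ) * l (n + 3) (k + 2)
            * Polynomial.eval ((k : ℝ) / (n + 1)) P := by
  have hPc : Continuous fun t : ℝ => (Polynomial.derivative P).eval t :=
    Polynomial.continuous _
  have hInt : IntegrableOn (fun t : ℝ => (Polynomial.derivative P).eval t)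
      (Set.Ioc (0 : ℝ) 1) volume := hPc.integrableOn_Ioc
  have hpt : ∀ t : ℝ, (Polynomial.derivative P).eval t * Fn l n t
      = ∑ k ∈ Finset.range (n + 2), ((n + 1).choose k : ℝ) * l (n + 3) (k + 2)
          * (Set.Ici ((k : ℝ) / (n + 1))).indicator
              (fun u => (Polynomial.derivative P).eval u) t := by
    intro t
    rw [Fn, Finset.mul_sum]
    refine Finset.sum_congr rfl fun k _ => ?_
    by_cases h : t ∈ Set.Ici ((k : ℝ) / (n + 1))
    · rw [Set.indicator_of_mem h, Set.indicator_of_mem h]; ring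
    · rw [Set.indicator_of_notMem h, Set.indicator_of_notMem h]; ring
  have hterm : ∀ k ∈ Finset.range (n + 2),
      ∫ t in Set.Ioc (0 : ℝ) 1, ((n + 1).choose k : ℝ) * l (n + 3) (k + 2)
          * (Set.Ici ((k : ℝ) / (n + 1))).indicator
              (fun u => (Polynomial.derivative P).eval u) t
        = ((n + 1).choose k : ℝ) * l (n + 3) (k + 2)
            * (Polynomial.eval 1 P - Polynomial.eval ((k : ℝ) / (n + 1)) P) := by
    intro k hk
    set c : ℝ := (k : ℝ) / (n + 1) with hc
    have hc0 : 0 ≤ c := by positivity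
    have hc1 : c ≤ 1 := by
      rw [hc, div_le_one (by positivity)]
      exact_mod_cast (by have := Finset.mem_range.1 hk; omega : k ≤ n + 1)
    rw [MeasureTheory.integral_const_mul, MeasureTheory.integral_indicator measurableSet_Ici,
      MeasureTheory.Measure.restrict_restrict measurableSet_Ici]
    have hae : (Set.Ici c ∩ Set.Ioc (0 : ℝ) 1 : Set ℝ) =ᵐ[volume] (Set.Ioc c 1 : Set ℝ) := by
      rw [MeasureTheory.ae_eq_set]
      constructor
      · refine measure_mono_null (fun x hx => ?_) (Real.volume_singleton (a := c))
        simp only [Set.mem_diff, Set.mem_inter_iff, Set.mem_Ici, Set.mem_Ioc,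
          Set.mem_singleton_iff] at hx ⊢
        rcases hx with ⟨⟨h1, h2, h3⟩, h4⟩
        by_contra hne
        exact h4 ⟨lt_of_le_of_ne h1 (Ne.symm hne), h3⟩
      · refine measure_mono_null (fun x hx => ?_) (measure_empty (μ := volume))
        simp only [Set.mem_diff, Set.mem_inter_iff, Set.mem_Ici, Set.mem_Ioc] at hx
        rcases hx with ⟨⟨h1, h2⟩, h3⟩
        exact absurd ⟨le_of_lt h1, lt_of_le_of_lt hc0 h1, h2⟩ h3
    rw [MeasureTheory.setIntegral_congr_set hae]
    have hftc : ∫ t in c..1, (Polynomial.derivative P).eval t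
        = Polynomial.eval 1 P - Polynomial.eval c P := by
      refine intervalIntegral.integral_eq_sub_of_hasDerivAt
        (fun x _ => Polynomial.hasDerivAt P x) ?_
      exact hPc.intervalIntegrable _ _
    rw [intervalIntegral.integral_of_le hc1] at hftc
    rw [hftc]
  calc ∫ t in Set.Ioc (0 : ℝ) 1, (Polynomial.derivative P).eval t * Fn l n t
      = ∫ t in Set.Ioc (0 : ℝ) 1, ∑ k ∈ Finset.range (n + 2),
          ((n + 1).choose k : ℝ) * l (n + 3) (k + 2)
            * (Set.Ici ((k : ℝ) / (n + 1))).indicator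
                (fun u => (Polynomial.derivative P).eval u) t := by
        exact MeasureTheory.integral_congr_ae (Filter.Eventually.of_forall hpt)
    _ = ∑ k ∈ Finset.range (n + 2), ∫ t in Set.Ioc (0 : ℝ) 1,
          ((n + 1).choose k : ℝ) * l (n + 3) (k + 2)
            * (Set.Ici ((k : ℝ) / (n + 1))).indicator
                (fun u => (Polynomial.derivative P).eval u) t := by
        refine MeasureTheory.integral_finset_sum _ fun k _ => ?_
        exact ((hInt.indicator measurableSet_Ici).const_mul _)
    _ = ∑ k ∈ Finset.range (n + 2), ((n + 1).choose k : ℝ) * l (n + 3) (k + 2)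
          * (Polynomial.eval 1 P - Polynomial.eval ((k : ℝ) / (n + 1)) P) :=
        Finset.sum_congr rfl hterm
    _ = Polynomial.eval 1 P * l 2 2
        - ∑ k ∈ Finset.range (n + 2), ((n + 1).choose k : ℝ) * l (n + 3) (k + 2)
            * Polynomial.eval ((k : ℝ) / (n + 1)) P := by
        rw [← Fn_mass hrec n, Finset.mul_sum, ← Finset.sum_sub_distrib]
        exact Finset.sum_congr rfl fun k _ => by ring

open Filter Topology in
lemma exists_G {l : ℕ → ℕ → ℝ}
    (hnn : ∀ b k, 2 ≤ k → k ≤ b → 0 ≤ l b k)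
    (hrec : ∀ b k, 2 ≤ k → k ≤ b → l b k = l (b + 1) k + l (b + 1) (k + 1)) :
    ∃ (G : StieltjesFunction ℝ) (φ : ℕ → ℕ), StrictMono φ ∧
      (∀ x : ℝ, x < 0 → G x = 0) ∧ (∀ x : ℝ, 1 ≤ x → G x = l 2 2) ∧
      (∀ x : ℝ, 0 ≤ G x) ∧
      (∀ t : ℝ, ContinuousAt G t →
        Filter.Tendsto (fun j => Fn l (φ j) t) Filter.atTop (nhds (G t))) := by
  set c0 := l 2 2 with hc0
  have hc00 : 0 ≤ c0 := hnn 2 2 le_rfl le_rfl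
  -- subsequence along which all rational evaluations converge
  set u : ℕ → (ℚ → Set.Icc (0 : ℝ) c0) := fun n q =>
    ⟨Fn l n (q : ℝ), ⟨Fn_nonneg hnn n _, Fn_le_c0 hnn hrec n _⟩⟩ with hu
  obtain ⟨a, φ, hφ, hconv0⟩ := CompactSpace.tendsto_subseq u
  have hconv : ∀ q : ℚ, Filter.Tendsto (fun j => Fn l (φ j) (q : ℝ))
      Filter.atTop (nhds ((a q : ℝ))) := by
    intro q
    have h1 : Filter.Tendsto (fun j => u (φ j) q) Filter.atTop (nhds (a q)) :=
      tendsto_pi_nhds.1 hconv0 q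
    exact ((continuous_subtype_val.tendsto (a q)).comp h1)
  set g : ℚ → ℝ := fun q => (a q : ℝ) with hg
  have hg0 : ∀ q, 0 ≤ g q := fun q => (a q).2.1
  have hgc : ∀ q, g q ≤ c0 := fun q => (a q).2.2
  have hgmono : ∀ q q' : ℚ, (q : ℝ) ≤ (q' : ℝ) → g q ≤ g q' := by
    intro q q' hqq
    exact le_of_tendsto_of_tendsto' (hconv q) (hconv q')
      (fun j => Fn_mono hnn (φ j) hqq)
  have hgneg : ∀ q : ℚ, (q : ℝ) < 0 → g q = 0 := by
    intro q hq
    exact tendsto_nhds_unique (hconv q)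
      (by simpa [Fn_of_neg _ hq] using tendsto_const_nhds (α := ℝ) (f := Filter.atTop (α := ℕ)))
  have hgone : ∀ q : ℚ, (1 : ℝ) ≤ (q : ℝ) → g q = c0 := by
    intro q hq
    exact tendsto_nhds_unique (hconv q)
      (by simpa [Fn_of_ge_one hrec _ hq, hc0]
        using tendsto_const_nhds (x := l 2 2) (f := Filter.atTop (α := ℕ)))
  -- the candidate CDF
  set G : ℝ → ℝ := fun x => sInf (g '' {q : ℚ | x < (q : ℝ)}) with hG
  have hne : ∀ x : ℝ, (g '' {q : ℚ | x < (q : ℝ)}).Nonempty := by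
    intro x
    obtain ⟨q, hq⟩ := exists_rat_gt x
    exact ⟨g q, ⟨q, hq, rfl⟩⟩
  have hbdd : ∀ x : ℝ, BddBelow (g '' {q : ℚ | x < (q : ℝ)}) := by
    intro x
    exact ⟨0, fun y ⟨q, _, hq⟩ => hq ▸ hg0 q⟩
  have hGle : ∀ (x : ℝ) (q : ℚ), x < (q : ℝ) → G x ≤ g q := by
    intro x q hq
    exact csInf_le (hbdd x) ⟨q, hq, rfl⟩
  have hleG : ∀ (x : ℝ) (b : ℝ), (∀ q : ℚ, x < (q : ℝ) → b ≤ g q) → b ≤ G x := by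
    intro x b hb
    exact le_csInf (hne x) (fun y ⟨q, hq, hyq⟩ => hyq ▸ hb q hq)
  have hGmono : Monotone G := by
    intro x y hxy
    exact hleG y (G x) fun q hq => hGle x q (lt_of_le_of_lt hxy hq)
  have hG0 : ∀ x, 0 ≤ G x := fun x => hleG x 0 fun q _ => hg0 q
  have hGneg : ∀ x : ℝ, x < 0 → G x = 0 := by
    intro x hx
    obtain ⟨q, hq1, hq2⟩ := exists_rat_btwn hx
    exact le_antisymm (by rw [← hgneg q hq2]; exact hGle x q hq1) (hG0 x)
  have hGone : ∀ x : ℝ, 1 ≤ x → G x = c0 := by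
    intro x hx
    refine le_antisymm ?_ ?_
    · obtain ⟨q, hq⟩ := exists_rat_gt x
      calc G x ≤ g q := hGle x q hq
        _ ≤ c0 := hgc q
    · exact hleG x c0 fun q hq => le_of_eq (hgone q (le_trans hx hq.le)).symm
  have hGrc : ∀ x : ℝ, ContinuousWithinAt G (Set.Ici x) x := by
    intro x
    have hmem : ∀ᶠ y in nhdsWithin x (Set.Ici x), x ≤ y :=
      eventually_mem_nhdsWithin.mono fun y hy => hy
    refine tendsto_order.2 ⟨?_, ?_⟩
    · intro b hb
      exact hmem.mono fun y hy => lt_of_lt_of_le hb (hGmono hy)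
    · intro b hb
      obtain ⟨y, ⟨q, hq, rfl⟩, hyb⟩ := exists_lt_of_csInf_lt (hne x) hb
      have hIco : Set.Ico x (q : ℝ) ∈ nhdsWithin x (Set.Ici x) :=
        Ico_mem_nhdsGE_of_mem ⟨le_refl x, hq⟩
      exact Filter.eventually_of_mem hIco fun y hy =>
        lt_of_le_of_lt (hGle y q hy.2) hyb
  refine ⟨⟨G, hGmono, hGrc⟩, φ, hφ, hGneg, hGone, hG0, ?_⟩
  intro t hcont
  rw [Metric.tendsto_atTop]
  intro ε hε
  obtain ⟨y, ⟨q2, hq2, rfl⟩, hq2b⟩ := exists_lt_of_csInf_lt (hne t)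
    (show G t < G t + ε by linarith)
  obtain ⟨δ, hδpos, hδ2⟩ := Metric.continuousAt_iff.1 hcont ε hε
  obtain ⟨q1, hq11, hq12⟩ := exists_rat_btwn (show t - δ / 2 < t by linarith)
  have hGs : G t - ε < g q1 := by
    have h1 : dist (t - δ / 2) t < δ := by
      rw [Real.dist_eq, show t - δ / 2 - t = -(δ / 2) by ring, abs_neg,
        abs_of_nonneg (by linarith)]
      linarith
    have h2 := hδ2 h1
    rw [Real.dist_eq, abs_lt] at h2
    have h3 : G t - ε < G (t - δ / 2) := by linarith [h2.1]
    exact lt_of_lt_of_le h3 (hGle (t - δ / 2) q1 hq11)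
  have hup := (hconv q2).eventually_lt_const hq2b
  have hlo := (hconv q1).eventually_const_lt hGs
  rcases Filter.eventually_atTop.1 (hup.and hlo) with ⟨N, hN⟩
  refine ⟨N, fun j hj => ?_⟩
  have h1 := (hN j hj).1
  have h2 := (hN j hj).2
  have hle1 : Fn l (φ j) (q1 : ℝ) ≤ Fn l (φ j) t := Fn_mono hnn _ hq12.le
  have hle2 : Fn l (φ j) t ≤ Fn l (φ j) (q2 : ℝ) := Fn_mono hnn _ hq2.le
  rw [Real.dist_eq, abs_lt]
  constructor <;> linarith

open Filter Topology MeasureTheory in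
lemma exists_rep {l : ℕ → ℕ → ℝ}
    (hnn : ∀ b k, 2 ≤ k → k ≤ b → 0 ≤ l b k)
    (hrec : ∀ b k, 2 ≤ k → k ≤ b → l b k = l (b + 1) k + l (b + 1) (k + 1)) :
    ∃ Λ₀ : Measure ℝ, IsFiniteMeasure Λ₀ ∧ Λ₀ (Set.Icc (0:ℝ) 1)ᶜ = 0 ∧
      ∀ r s : ℕ, ∫ x, x ^ r * (1 - x) ^ s ∂Λ₀ = l (r + s + 2) (r + 2) := by
  obtain ⟨GS, φ, hφ, hGneg, hGone, hG0, hGconv⟩ := exists_G hnn hrec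
  have hc00 : 0 ≤ l 2 2 := hnn 2 2 le_rfl le_rfl
  have htb : Tendsto (⇑GS) atBot (𝓝 0) := by
    refine Tendsto.congr' ?_ tendsto_const_nhds
    filter_upwards [Filter.Iio_mem_atBot (0 : ℝ)] with x hx
    exact (hGneg x hx).symm
  have htt : Tendsto (⇑GS) atTop (𝓝 (l 2 2)) := by
    refine Tendsto.congr' ?_ tendsto_const_nhds
    filter_upwards [Filter.Ici_mem_atTop (1 : ℝ)] with x hx
    exact (hGone x hx).symm
  set Λ₀ := GS.measure with hΛ
  have hfin : IsFiniteMeasure Λ₀ :=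
    ⟨by rw [GS.measure_univ htb htt]; exact ENNReal.ofReal_lt_top⟩
  haveI := hfin
  have hIic : ∀ x : ℝ, Λ₀ (Set.Iic x) = ENNReal.ofReal (GS x) := by
    intro x; rw [GS.measure_Iic htb x, sub_zero]
  have hneg : Λ₀ (Set.Iio (0 : ℝ)) = 0 := by
    have hsub : Set.Iio (0 : ℝ) ⊆ ⋃ n : ℕ, Set.Iic (-(((n : ℝ) + 1)⁻¹)) := by
      intro x hx
      have hx' : x < 0 := hx
      obtain ⟨n, hn⟩ := exists_nat_one_div_lt (show (0 : ℝ) < -x by linarith)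
      rw [one_div] at hn
      exact Set.mem_iUnion.2 ⟨n, by simp only [Set.mem_Iic]; linarith⟩
    have hz : ∀ n : ℕ, Λ₀ (Set.Iic (-(((n : ℝ) + 1)⁻¹))) = 0 := by
      intro n
      rw [hIic, hGneg _ (neg_lt_zero.2 (by positivity)), ENNReal.ofReal_zero]
    exact measure_mono_null hsub (le_antisymm (le_trans (measure_iUnion_le _)
      (le_of_eq (ENNReal.tsum_eq_zero.2 hz))) zero_le)
  have hgt : Λ₀ (Set.Ioi (1 : ℝ)) = 0 := by
    have hsub : Set.Ioi (1 : ℝ) ⊆ ⋃ n : ℕ, Set.Ioc (1 : ℝ) ((n : ℝ) + 1) := by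
      intro x hx
      obtain ⟨n, hn⟩ := exists_nat_ge x
      exact Set.mem_iUnion.2 ⟨n, hx, by linarith⟩
    have hz : ∀ n : ℕ, Λ₀ (Set.Ioc (1 : ℝ) ((n : ℝ) + 1)) = 0 := by
      intro n
      rw [GS.measure_Ioc, hGone _ (by linarith [Nat.cast_nonneg (α := ℝ) n]), hGone _ le_rfl]
      simp
    exact measure_mono_null hsub (le_antisymm (le_trans (measure_iUnion_le _)
      (le_of_eq (ENNReal.tsum_eq_zero.2 hz))) zero_le)
  have hcompl : Λ₀ (Set.Icc (0 : ℝ) 1)ᶜ = 0 := by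
    refine measure_mono_null (fun x hx => ?_) (measure_union_null hneg hgt)
    simp only [Set.mem_compl_iff, Set.mem_Icc, not_and_or, not_le] at hx
    simpa [Set.mem_union, Set.mem_Iio, Set.mem_Ioi] using hx
  refine ⟨Λ₀, hfin, hcompl, ?_⟩
  intro r s
  set P : Polynomial ℝ := Polynomial.X ^ r * (1 - Polynomial.X) ^ s with hP
  have hPeval : ∀ x : ℝ, P.eval x = x ^ r * (1 - x) ^ s := by
    intro x; simp [hP]
  have hPc' : Continuous fun t : ℝ => (Polynomial.derivative P).eval t :=
    Polynomial.continuous _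
  obtain ⟨M, hM⟩ := (isCompact_Icc (a := (0 : ℝ)) (b := 1)).exists_bound_of_continuousOn
    hPc'.continuousOn
  have hM0 : 0 ≤ M :=
    le_trans (norm_nonneg _) (hM 0 (Set.mem_Icc.2 ⟨le_rfl, zero_le_one⟩))
  haveI hfinres : IsFiniteMeasure (volume.restrict (Set.Ioc (0 : ℝ) 1)) := by
    constructor
    rw [Measure.restrict_apply_univ]
    simp [Real.volume_Ioc]
  have haeconv : ∀ᵐ t ∂(volume.restrict (Set.Ioc (0 : ℝ) 1)),
      Tendsto (fun j => Fn l (φ j) t) atTop (𝓝 (GS t)) := by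
    refine ae_restrict_of_ae ?_
    have hnull : volume {t : ℝ | ¬ContinuousAt (⇑GS) t} = 0 :=
      (GS.mono'.countable_not_continuousAt).measure_zero _
    rw [ae_iff]
    refine measure_mono_null (fun t ht => ?_) hnull
    simp only [Set.mem_setOf_eq] at ht ⊢
    intro hcont
    exact ht (hGconv t hcont)
  have hDCT : Tendsto
      (fun j => ∫ t in Set.Ioc (0 : ℝ) 1, (Polynomial.derivative P).eval t * Fn l (φ j) t)
      atTop (𝓝 (∫ t in Set.Ioc (0 : ℝ) 1, (Polynomial.derivative P).eval t * GS t)) := by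
    refine MeasureTheory.tendsto_integral_of_dominated_convergence
      (fun _ => M * l 2 2) ?_ ?_ ?_ ?_
    · intro j
      exact (hPc'.measurable.mul (Fn_measurable hnn (φ j))).aestronglyMeasurable
    · exact MeasureTheory.integrable_const _
    · intro j
      filter_upwards [MeasureTheory.ae_restrict_mem measurableSet_Ioc] with t ht
      rw [Real.norm_eq_abs, abs_mul]
      have h1 : |(Polynomial.derivative P).eval t| ≤ M := by
        simpa [Real.norm_eq_abs] using hM t (Set.mem_Icc.2 ⟨ht.1.le, ht.2⟩)
      have h2 : |Fn l (φ j) t| ≤ l 2 2 := by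
        rw [abs_of_nonneg (Fn_nonneg hnn _ _)]
        exact Fn_le_c0 hnn hrec _ _
      exact mul_le_mul h1 h2 (abs_nonneg _) hM0
    · exact haeconv.mono fun t ht => ht.const_mul _
  have hserm : Tendsto (fun j => ∑ k ∈ Finset.range (φ j + 2),
      ((φ j + 1).choose k : ℝ) * l (φ j + 3) (k + 2) * P.eval ((k : ℝ) / (φ j + 1)))
      atTop (𝓝 (l (r + s + 2) (r + 2))) := by
    have happ := approx_tendsto hnn hrec r s
    have hcomp : Tendsto (fun j => φ j + 1) atTop atTop :=
      (Filter.tendsto_add_atTop_nat 1).comp hφ.tendsto_atTop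
    refine (happ.comp hcomp).congr fun j => ?_
    simp only [Function.comp_apply]
    rw [show φ j + 1 + 2 = φ j + 3 by omega]
    refine Finset.sum_congr rfl fun k hk => ?_
    have hkm : k ≤ φ j + 1 := by have := Finset.mem_range.1 hk; omega
    have hm0 : (0 : ℝ) < (φ j : ℝ) + 1 := by positivity
    rw [hPeval]
    have h1m : (1 : ℝ) - (k : ℝ) / ((φ j : ℝ) + 1)
        = ((φ j + 1 - k : ℕ) : ℝ) / ((φ j : ℝ) + 1) := by
      rw [Nat.cast_sub hkm]
      push_cast
      field_simp
    rw [show ((φ j + 1 : ℕ) : ℝ) = (φ j : ℝ) + 1 by push_cast; ring, h1m]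
    ring
  have hlim2 : Tendsto
      (fun j => ∫ t in Set.Ioc (0 : ℝ) 1, (Polynomial.derivative P).eval t * Fn l (φ j) t)
      atTop (𝓝 (Polynomial.eval 1 P * l 2 2 - l (r + s + 2) (r + 2))) := by
    refine (hserm.const_sub (Polynomial.eval 1 P * l 2 2)).congr fun j => ?_
    exact (Fn_integral hnn hrec P (φ j)).symm
  have hGint : ∫ t in Set.Ioc (0 : ℝ) 1, (Polynomial.derivative P).eval t * GS t
      = Polynomial.eval 1 P * l 2 2 - l (r + s + 2) (r + 2) :=
    tendsto_nhds_unique hDCT hlim2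
  -- measure-side computation via Fubini
  have haeIcc : ∀ᵐ x ∂Λ₀, x ∈ Set.Icc (0 : ℝ) 1 := by
    rw [ae_iff]
    exact hcompl
  set f : ℝ → ℝ → ℝ := fun x t => if x < t then (Polynomial.derivative P).eval t else 0
    with hf
  have hptx : ∀ x ∈ Set.Icc (0 : ℝ) 1,
      Polynomial.eval x P = Polynomial.eval 1 P - ∫ t in Set.Ioc (0 : ℝ) 1, f x t := by
    intro x hx
    have hset : Set.Ioi x ∩ Set.Ioc (0 : ℝ) 1 = Set.Ioc x 1 := by
      ext t
      simp only [Set.mem_inter_iff, Set.mem_Ioi, Set.mem_Ioc]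
      constructor
      · rintro ⟨h1, _, h3⟩; exact ⟨h1, h3⟩
      · rintro ⟨h1, h2⟩; exact ⟨h1, lt_of_le_of_lt hx.1 h1, h2⟩
    have hfind : (fun t => f x t)
        = (Set.Ioi x).indicator (fun u => (Polynomial.derivative P).eval u) := by
      funext t
      by_cases h : x < t
      · rw [hf]; simp only []
        rw [if_pos h, Set.indicator_of_mem (Set.mem_Ioi.2 h)]
      · rw [hf]; simp only []
        rw [if_neg h, Set.indicator_of_notMem (by simpa [Set.mem_Ioi] using h)]
    have heq1 : ∫ t in Set.Ioc (0 : ℝ) 1, f x t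
        = ∫ t in Set.Ioc x 1, (Polynomial.derivative P).eval t := by
      rw [hfind, MeasureTheory.integral_indicator measurableSet_Ioi,
        Measure.restrict_restrict measurableSet_Ioi, hset]
    have hftc : ∫ t in x..1, (Polynomial.derivative P).eval t
        = Polynomial.eval 1 P - Polynomial.eval x P :=
      intervalIntegral.integral_eq_sub_of_hasDerivAt
        (fun u _ => Polynomial.hasDerivAt P u) (hPc'.intervalIntegrable _ _)
    rw [intervalIntegral.integral_of_le hx.2] at hftc
    rw [heq1, hftc]
    ring
  have hmeas : Measurable (Function.uncurry f) := by
    have : Function.uncurry f = fun p : ℝ × ℝ =>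
        if p.1 < p.2 then (Polynomial.derivative P).eval p.2 else 0 := rfl
    rw [this]
    exact Measurable.ite (measurableSet_lt measurable_fst measurable_snd)
      (hPc'.measurable.comp measurable_snd) measurable_const
  have haeT : ∀ᵐ p ∂(Λ₀.prod (volume.restrict (Set.Ioc (0 : ℝ) 1))),
      p.2 ∈ Set.Ioc (0 : ℝ) 1 := by
    rw [ae_iff]
    refine measure_mono_null (fun p hp => ?_)
      (show (Λ₀.prod (volume.restrict (Set.Ioc (0 : ℝ) 1)))
        (Set.univ ×ˢ (Set.Ioc (0 : ℝ) 1)ᶜ) = 0 from ?_)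
    · exact Set.mem_prod.2 ⟨Set.mem_univ _, hp⟩
    · rw [Measure.prod_prod, Measure.restrict_apply measurableSet_Ioc.compl]
      simp
  have hint : Integrable (Function.uncurry f)
      (Λ₀.prod (volume.restrict (Set.Ioc (0 : ℝ) 1))) := by
    refine Integrable.mono' (integrable_const M) hmeas.aestronglyMeasurable ?_
    filter_upwards [haeT] with p hp
    rw [Real.norm_eq_abs]
    by_cases h : p.1 < p.2
    · have : Function.uncurry f p = (Polynomial.derivative P).eval p.2 := by
        simp only [Function.uncurry, hf, if_pos h]
      rw [this]
      simpa [Real.norm_eq_abs] using hM p.2 (Set.mem_Icc.2 ⟨hp.1.le, hp.2⟩)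
    · have : Function.uncurry f p = 0 := by
        simp only [Function.uncurry, hf, if_neg h]
      rw [this, abs_zero]
      exact hM0
  have hswap := MeasureTheory.integral_integral_swap (f := f) hint
  have hin : ∀ t : ℝ, ∫ x, f x t ∂Λ₀ = (Λ₀ (Set.Iio t)).toReal * (Polynomial.derivative P).eval t := by
    intro t
    have hrw : (fun x => f x t)
        = (Set.Iio t).indicator (fun _ => (Polynomial.derivative P).eval t) := by
      funext x
      by_cases h : x < t
      · rw [hf]; simp only []
        rw [if_pos h, Set.indicator_of_mem (Set.mem_Iio.2 h)]
      · rw [hf]; simp only []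
        rw [if_neg h, Set.indicator_of_notMem (by simpa [Set.mem_Iio] using h)]
    rw [hrw, MeasureTheory.integral_indicator_const _ measurableSet_Iio, smul_eq_mul, measureReal_def]
  have haeG : ∀ᵐ t ∂(volume.restrict (Set.Ioc (0 : ℝ) 1)),
      (Λ₀ (Set.Iio t)).toReal = GS t := by
    refine ae_restrict_of_ae ?_
    have hnull : volume {t : ℝ | ¬ContinuousAt (⇑GS) t} = 0 :=
      (GS.mono'.countable_not_continuousAt).measure_zero _
    rw [ae_iff]
    refine measure_mono_null (fun t ht => ?_) hnull
    simp only [Set.mem_setOf_eq] at ht ⊢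
    intro hcont
    apply ht
    have hsing : Λ₀ {t} = 0 := by
      rw [GS.measure_singleton]
      have hll : Function.leftLim (⇑GS) t = GS t :=
        (GS.mono'.continuousWithinAt_Iio_iff_leftLim_eq).1 hcont.continuousWithinAt
      rw [hll, sub_self, ENNReal.ofReal_zero]
    have hIio : Λ₀ (Set.Iio t) = Λ₀ (Set.Iic t) := by
      rw [← Set.Iio_union_right (a := t),
        measure_union (by simp) (measurableSet_singleton t), hsing, add_zero]
    rw [hIio, hIic t, ENNReal.toReal_ofReal (hG0 t)]
  have hinner_int : Integrable (fun x => ∫ t in Set.Ioc (0 : ℝ) 1, f x t) Λ₀ :=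
    hint.integral_prod_left
  have hμuniv : (Λ₀ Set.univ).toReal = l 2 2 := by
    rw [GS.measure_univ htb htt, sub_zero, ENNReal.toReal_ofReal hc00]
  calc ∫ x, x ^ r * (1 - x) ^ s ∂Λ₀
      = ∫ x, Polynomial.eval x P ∂Λ₀ :=
        integral_congr_ae (Filter.Eventually.of_forall fun x => (hPeval x).symm)
    _ = ∫ x, (Polynomial.eval 1 P - ∫ t in Set.Ioc (0 : ℝ) 1, f x t) ∂Λ₀ :=
        integral_congr_ae (haeIcc.mono fun x hx => hptx x hx)
    _ = (Λ₀ Set.univ).toReal * Polynomial.eval 1 P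
        - ∫ x, (∫ t in Set.Ioc (0 : ℝ) 1, f x t) ∂Λ₀ := by
        rw [integral_sub (integrable_const _) hinner_int, integral_const, smul_eq_mul, measureReal_def]
    _ = l 2 2 * Polynomial.eval 1 P
        - ∫ t in Set.Ioc (0 : ℝ) 1, (Λ₀ (Set.Iio t)).toReal * (Polynomial.derivative P).eval t := by
        rw [hμuniv, hswap]
        congr 1
        exact integral_congr_ae (Filter.Eventually.of_forall fun t => hin t)
    _ = l 2 2 * Polynomial.eval 1 P
        - ∫ t in Set.Ioc (0 : ℝ) 1, (Polynomial.derivative P).eval t * GS t := by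
        congr 1
        refine integral_congr_ae (haeG.mono fun t ht => ?_)
        dsimp only
        rw [ht, mul_comm]
    _ = l (r + s + 2) (r + 2) := by
        rw [hGint]
        ring

open MeasureTheory in
lemma cont_integrable {κ : Measure (Set.Icc (0:ℝ) 1)} [IsFiniteMeasure κ]
    {g : Set.Icc (0:ℝ) 1 → ℝ} (hg : Continuous g) : Integrable g κ := by
  obtain ⟨C, hC⟩ := isCompact_univ.exists_bound_of_continuousOn hg.continuousOn
  refine Integrable.mono' (integrable_const C) hg.measurable.aestronglyMeasurable ?_
  exact Filter.Eventually.of_forall fun x => hC x (Set.mem_univ x)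

open MeasureTheory in
lemma unique_measure (μ ν : Measure (Set.Icc (0:ℝ) 1)) [IsFiniteMeasure μ] [IsFiniteMeasure ν]
    (h : ∀ r s : ℕ, ∫ x, (x : ℝ) ^ r * (1 - (x : ℝ)) ^ s ∂μ
      = ∫ x, (x : ℝ) ^ r * (1 - (x : ℝ)) ^ s ∂ν) : μ = ν := by
  have hxc : Continuous fun x : Set.Icc (0:ℝ) 1 => (x : ℝ) := continuous_subtype_val
  have hmono : ∀ i : ℕ, ∫ x, (x : ℝ) ^ i ∂μ = ∫ x, (x : ℝ) ^ i ∂ν := by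
    intro i
    have := h i 0
    simpa using this
  have hpoly : ∀ p : Polynomial ℝ,
      ∫ x, p.eval (x : ℝ) ∂μ = ∫ x, p.eval (x : ℝ) ∂ν := by
    intro p
    have hrw : ∀ κ : Measure (Set.Icc (0:ℝ) 1), IsFiniteMeasure κ →
        ∫ x, p.eval (x : ℝ) ∂κ
          = ∑ i ∈ Finset.range (p.natDegree + 1), p.coeff i * ∫ x, (x : ℝ) ^ i ∂κ := by
      intro κ hκ
      have h1 : ∀ x : Set.Icc (0:ℝ) 1, p.eval (x : ℝ)
          = ∑ i ∈ Finset.range (p.natDegree + 1), p.coeff i * (x : ℝ) ^ i := by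
        intro x
        rw [Polynomial.eval_eq_sum_range]
      rw [integral_congr_ae (Filter.Eventually.of_forall h1), integral_finset_sum]
      · exact Finset.sum_congr rfl fun i _ => by
          rw [integral_const_mul]
      · intro i _
        exact cont_integrable (continuous_const.mul (hxc.pow i))
    rw [hrw μ inferInstance, hrw ν inferInstance]
    exact Finset.sum_congr rfl fun i _ => by rw [hmono i]
  have hcontint : ∀ f : C(Set.Icc (0:ℝ) 1, ℝ),
      ∫ x, f x ∂μ = ∫ x, f x ∂ν := by
    intro f
    set K : ℝ := (μ Set.univ).toReal + (ν Set.univ).toReal with hK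
    have hK0 : 0 ≤ K := by positivity
    set D : ℝ := ∫ x, f x ∂μ - ∫ x, f x ∂ν with hD
    have hDbound : ∀ ε : ℝ, 0 < ε → |D| ≤ ε * K := by
      intro ε hε
      obtain ⟨p, hp⟩ := exists_polynomial_near_continuousMap 0 1 f ε hε
      have hfint : ∀ (κ : Measure (Set.Icc (0:ℝ) 1)) (_ : IsFiniteMeasure κ),
          ‖∫ x, (f x - p.eval (x : ℝ)) ∂κ‖ ≤ ε * (κ Set.univ).toReal := by
        intro κ hκ
        refine norm_integral_le_of_norm_le_const ?_
        refine Filter.Eventually.of_forall fun x => ?_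
        have h1 := ContinuousMap.norm_coe_le_norm (p.toContinuousMapOn (Set.Icc (0:ℝ) 1) - f) x
        have h2 : (p.toContinuousMapOn (Set.Icc (0:ℝ) 1) - f) x = p.eval (x : ℝ) - f x := by
          simp [Polynomial.toContinuousMapOn, Polynomial.toContinuousMap]
        rw [h2] at h1
        have h3 : ‖f x - p.eval (x : ℝ)‖ = ‖p.eval (x : ℝ) - f x‖ := norm_sub_rev _ _
        rw [h3]
        exact le_trans h1 (le_of_lt hp)
      have hintf : ∀ (κ : Measure (Set.Icc (0:ℝ) 1)) (_ : IsFiniteMeasure κ),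
          ∫ x, (f x - p.eval (x : ℝ)) ∂κ = ∫ x, f x ∂κ - ∫ x, p.eval (x : ℝ) ∂κ := by
        intro κ hκ
        haveI := hκ
        exact integral_sub (cont_integrable f.continuous)
          (cont_integrable ((p.continuous).comp hxc))
      have e1 := hfint μ inferInstance
      have e2 := hfint ν inferInstance
      rw [hintf μ inferInstance, Real.norm_eq_abs] at e1
      rw [hintf ν inferInstance, Real.norm_eq_abs] at e2
      have e3 := hpoly p
      have habs : |D| ≤ |(∫ x, f x ∂μ) - ∫ x, p.eval (x : ℝ) ∂μ|
          + |(∫ x, f x ∂ν) - ∫ x, p.eval (x : ℝ) ∂ν| := by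
        have hsplit : D = ((∫ x, f x ∂μ) - ∫ x, p.eval (x : ℝ) ∂μ)
            - ((∫ x, f x ∂ν) - ∫ x, p.eval (x : ℝ) ∂ν) := by
          rw [hD, e3]; ring
        rw [hsplit]
        exact abs_sub _ _
      have hfin1 : (0:ℝ) ≤ (μ Set.univ).toReal := ENNReal.toReal_nonneg
      have hfin2 : (0:ℝ) ≤ (ν Set.univ).toReal := ENNReal.toReal_nonneg
      have : ε * (μ Set.univ).toReal + ε * (ν Set.univ).toReal = ε * K := by rw [hK]; ring
      linarith
    have habs0 : |D| ≤ 0 := by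
      refine le_of_forall_pos_le_add fun ε hε => ?_
      have h1 := hDbound (ε / (K + 1)) (by positivity)
      have h2 : ε / (K + 1) * K ≤ ε := by
        rw [div_mul_eq_mul_div, div_le_iff₀ (by linarith)]
        nlinarith
      linarith
    have hD0 : D = 0 := abs_nonpos_iff.1 habs0
    rw [hD] at hD0
    linarith
  haveI : HasOuterApproxClosed (Set.Icc (0:ℝ) 1) := inferInstance
  refine ext_of_forall_lintegral_eq_of_IsFiniteMeasure fun f => ?_
  have hcR : Continuous fun x : Set.Icc (0:ℝ) 1 => (f x : ℝ) :=
    NNReal.continuous_coe.comp f.continuous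
  rw [lintegral_coe_eq_integral _ (cont_integrable hcR),
    lintegral_coe_eq_integral _ (cont_integrable hcR)]
  congr 1
  exact hcontint ⟨fun x => (f x : ℝ), hcR⟩

end LCR

/-- Integral (de Finetti / Hausdorff) representation of the consistent
collision-rate arrays of `Λ`-coalescents. -/
theorem lambda_coalescent_rates_integral_representation (l : ℕ → ℕ → ℝ)
    (hnn : ∀ b k, 2 ≤ k → k ≤ b → 0 ≤ l b k)
    (hrec : ∀ b k, 2 ≤ k → k ≤ b → l b k = l (b + 1) k + l (b + 1) (k + 1)) :
    ∃! Λ : Measure (Set.Icc (0:ℝ) 1), IsFiniteMeasure Λ ∧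
      ∀ b k, 2 ≤ k → k ≤ b →
        l b k = ∫ x, (x : ℝ) ^ (k - 2) * (1 - (x : ℝ)) ^ (b - k) ∂Λ := by
  classical
  obtain ⟨Λ₀, hfin, hcompl, hmom⟩ := LCR.exists_rep hnn hrec
  haveI := hfin
  have hemb : MeasurableEmbedding (Subtype.val : Set.Icc (0:ℝ) 1 → ℝ) :=
    MeasurableEmbedding.subtype_coe measurableSet_Icc
  set Λ : Measure (Set.Icc (0:ℝ) 1) := Λ₀.comap Subtype.val with hΛdef
  have hresAE : ∀ᵐ x ∂Λ₀, x ∈ Set.Icc (0:ℝ) 1 := by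
    rw [MeasureTheory.ae_iff]; exact hcompl
  have hmap : Measure.map Subtype.val Λ = Λ₀ := by
    rw [hΛdef, hemb.map_comap, Subtype.range_coe,
      MeasureTheory.Measure.restrict_eq_self_of_ae_mem hresAE]
  have hΛfin : IsFiniteMeasure Λ := by
    constructor
    rw [hΛdef, hemb.comap_apply]
    exact lt_of_le_of_lt (measure_mono (Set.subset_univ _)) (measure_lt_top Λ₀ _)
  haveI := hΛfin
  have hmoments : ∀ b k, 2 ≤ k → k ≤ b →
      l b k = ∫ x : Set.Icc (0:ℝ) 1, (x : ℝ) ^ (k - 2) * (1 - (x : ℝ)) ^ (b - k) ∂Λ := by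
    intro b k hk2 hkb
    have h1 : ∫ x : Set.Icc (0:ℝ) 1, (x : ℝ) ^ (k - 2) * (1 - (x : ℝ)) ^ (b - k) ∂Λ
        = ∫ y : ℝ, y ^ (k - 2) * (1 - y) ^ (b - k) ∂Λ₀ := by
      rw [← hmap, hemb.integral_map]
    rw [h1, hmom (k - 2) (b - k)]
    congr 1 <;> omega
  refine ⟨Λ, ⟨hΛfin, hmoments⟩, ?_⟩
  rintro ν ⟨hνfin, hνmom⟩
  haveI := hνfin
  refine LCR.unique_measure ν Λ fun r s => ?_
  have h1 := hνmom (r + s + 2) (r + 2) (by omega) (by omega)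
  have h2 := hmoments (r + s + 2) (r + 2) (by omega) (by omega)
  have e1 : r + 2 - 2 = r := by omega
  have e2 : r + s + 2 - (r + 2) = s := by omega
  rw [e1, e2] at h1 h2
  rw [← h1, ← h2]
end

section
/- Let q = (q(b:k), 1 ≤ k ≤ b < ∞) be an infinite decrement matrix. Define p on compositions by p(∅) = 1 and p(n_1,…,n_ℓ) = ∑_σ q(N_{σ(1)}:n_{σ(1)})·⋯·q(N_{σ(ℓ)}:n_{σ(ℓ)}) / M(n; n_1,…,n_ℓ), where the sum is over all permutations σ of {1,…,ℓ}, N_{σ(j)} = n_{σ(j)} + n_{σ(j+1)} + ⋯ + n_{σ(ℓ)}, n = n_1+⋯+n_ℓ, and M(n; n_1,…,n_ℓ) = n!/(n_1!⋯n_ℓ!) is the multinomial coefficient. Then p satisfies the regenerative recursion: for every nonempty composition (n_1,…,n_ℓ) of n, p(n_1,…,n_ℓ) = ∑_{j=1}^ℓ (1/C(n,n_j))·q(n:n_j)·p(…,n̂_j,…), where (…,n̂_j,…) is obtained by deleting the part n_j. -/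
open Finset MeasureTheory

/-- The explicit permutation-sum formula for the EPPF of a regenerative partition:
`p(n_1,…,n_ℓ) = ∑_σ q(N_{σ(1)}:n_{σ(1)}) ⋯ q(N_{σ(ℓ)}:n_{σ(ℓ)}) / M(n; n_1,…,n_ℓ)`. -/
noncomputable def pReg (q : ℕ → ℕ → ℝ) (c : List ℕ) : ℝ :=
  (∑ σ : Equiv.Perm (Fin c.length), ∏ j : Fin c.length,
      q (∑ j' ∈ Finset.univ.filter (fun j' : Fin c.length => j ≤ j'), c.get (σ j'))
        (c.get (σ j)))
    / (Nat.multinomial Finset.univ c.get : ℝ)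


noncomputable def mySf (q : ℕ → ℕ → ℝ) {n : ℕ} (f : Fin n → ℕ) : ℝ :=
  ∑ σ : Equiv.Perm (Fin n), ∏ j : Fin n,
    q (∑ j' ∈ Finset.univ.filter (fun j' : Fin n => j ≤ j'), f (σ j')) (f (σ j))

lemma mySf_cast (q : ℕ → ℕ → ℝ) {n m : ℕ} (h : n = m) (f : Fin n → ℕ) (g : Fin m → ℕ)
    (hfg : ∀ i : Fin n, f i = g (Fin.cast h i)) : mySf q f = mySf q g := by
  subst h
  have hh : f = g := funext fun i => hfg i
  subst hh; rfl

lemma myM_cast {n m : ℕ} (h : n = m) (f : Fin n → ℕ) (g : Fin m → ℕ)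
    (hfg : ∀ i : Fin n, f i = g (Fin.cast h i)) :
    Nat.multinomial Finset.univ f = Nat.multinomial Finset.univ g := by
  subst h
  have hh : f = g := funext fun i => hfg i
  subst hh; rfl

def myIns {m : ℕ} (p : Fin (m + 1)) (e : Equiv.Perm (Fin m)) : Equiv.Perm (Fin (m + 1)) :=
  (finSuccEquiv' 0).trans ((Equiv.optionCongr e).trans (finSuccEquiv' p).symm)

lemma myIns_zero {m : ℕ} (p : Fin (m + 1)) (e : Equiv.Perm (Fin m)) : myIns p e 0 = p := by
  simp [myIns]

lemma myIns_succ {m : ℕ} (p : Fin (m + 1)) (e : Equiv.Perm (Fin m)) (i : Fin m) :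
    myIns p e i.succ = p.succAbove (e i) := by
  have h0 : i.succ = (0 : Fin (m + 1)).succAbove i := by simp
  show (finSuccEquiv' p).symm (Equiv.optionCongr e (finSuccEquiv' 0 i.succ)) = _
  rw [h0, finSuccEquiv'_succAbove]
  simp

lemma myIns_bijective {m : ℕ} :
    Function.Bijective (fun x : Fin (m + 1) × Equiv.Perm (Fin m) => myIns x.1 x.2) := by
  rw [Fintype.bijective_iff_injective_and_card]
  constructor
  · rintro ⟨p, e⟩ ⟨p', e'⟩ h
    simp only at h
    have hp : p = p' := by rw [← myIns_zero p e, h, myIns_zero]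
    subst hp
    have he : e = e' := by
      ext i
      have := congrArg (fun σ : Equiv.Perm (Fin (m + 1)) => σ i.succ) h
      simp only [myIns_succ] at this
      exact congrArg Fin.val (Fin.succAbove_right_injective this)
    rw [he]
  · simp [Fintype.card_perm, Nat.factorial_succ]

lemma mySf_succ (q : ℕ → ℕ → ℝ) {m : ℕ} (f : Fin (m + 1) → ℕ) :
    mySf q f = ∑ p : Fin (m + 1), q (∑ j, f j) (f p) * mySf q (f ∘ p.succAbove) := by
  rw [mySf, ← Fintype.sum_bijective _ myIns_bijective _ _ (fun x => rfl),
    Fintype.sum_prod_type]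
  refine Finset.sum_congr rfl fun p _ => ?_
  rw [mySf, Finset.mul_sum]
  refine Finset.sum_congr rfl fun e _ => ?_
  rw [Fin.prod_univ_succ]
  congr 1
  · rw [myIns_zero]
    congr 1
    have : Finset.univ.filter (fun j' : Fin (m + 1) => (0 : Fin (m+1)) ≤ j') = Finset.univ := by
      simp [Fin.zero_le]
    rw [this, Equiv.sum_comp (myIns p e) f]
  · refine Finset.prod_congr rfl fun i _ => ?_
    rw [myIns_succ]
    congr 1
    rw [Finset.sum_filter, Finset.sum_filter, Fin.sum_univ_succ]
    have h0 : ¬ (i.succ ≤ (0 : Fin (m + 1))) := by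
      simp [Fin.le_zero_iff, Fin.succ_ne_zero]
    rw [if_neg h0, zero_add]
    refine Finset.sum_congr rfl fun i' _ => ?_
    simp only [Fin.succ_le_succ_iff, myIns_succ]
    rfl

lemma myM_succ {m : ℕ} (f : Fin (m + 1) → ℕ) (p : Fin (m + 1)) :
    Nat.multinomial Finset.univ f
      = (∑ j, f j).choose (f p) * Nat.multinomial Finset.univ (f ∘ p.succAbove) := by
  have h1 : (Finset.univ : Finset (Fin (m + 1))) = insert p (Finset.univ.erase p) := by
    simp
  have herase : ∀ g : Fin (m + 1) → ℕ,
      ∑ i ∈ Finset.univ.erase p, g i = ∑ i : Fin m, g (p.succAbove i) := by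
    intro g
    have := Fin.sum_univ_succAbove g p
    have h2 : g p + ∑ i ∈ Finset.univ.erase p, g i = ∑ i, g i :=
      Finset.add_sum_erase _ g (Finset.mem_univ p)
    omega
  have heraseP :
      ∏ i ∈ Finset.univ.erase p, Nat.factorial (f i) = ∏ i : Fin m, Nat.factorial (f (p.succAbove i)) := by
    have := Fin.prod_univ_succAbove (fun i => Nat.factorial (f i)) p
    have h2 : Nat.factorial (f p) * ∏ i ∈ Finset.univ.erase p, Nat.factorial (f i) = ∏ i, Nat.factorial (f i) :=
      Finset.mul_prod_erase _ (fun i => Nat.factorial (f i)) (Finset.mem_univ p)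
    have h3 : Nat.factorial (f p) * ∏ i ∈ Finset.univ.erase p, Nat.factorial (f i)
        = Nat.factorial (f p) * ∏ i : Fin m, Nat.factorial (f (p.succAbove i)) := by rw [h2, this]
    exact Nat.eq_of_mul_eq_mul_left (Nat.factorial_pos _) h3
  have hM : Nat.multinomial (Finset.univ.erase p) f
      = Nat.multinomial Finset.univ (f ∘ p.succAbove) := by
    rw [Nat.multinomial, Nat.multinomial, herase f, heraseP]
    rfl
  rw [h1, Nat.multinomial_insert (Finset.notMem_erase p _), hM, herase f,
    ← Fin.sum_univ_succAbove f p, ← h1]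

/-- The permutation-sum formula satisfies the regenerative recursion
`p(n_1,…,n_ℓ) = ∑_j (1/C(n,n_j)) q(n:n_j) p(…, n̂_j, …)`. -/
theorem pReg_satisfies_regenerative_recursion (q : ℕ → ℕ → ℝ) (hq : IsDecrementMatrix q) :
    pReg q [] = 1 ∧
    ∀ c : List ℕ, IsComposition c →
      pReg q c = ∑ j ∈ Finset.range c.length,
        1 / (c.sum.choose (c.getD j 0) : ℝ) * q c.sum (c.getD j 0) * pReg q (c.eraseIdx j) := by
  --

  constructor
  · simp [pReg, Nat.multinomial]
  · intro c hc
    obtain ⟨hne, -⟩ := hc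
    obtain ⟨m, hm⟩ : ∃ m, c.length = m + 1 := by
      cases c with
      | nil => exact absurd rfl hne
      | cons a l => exact ⟨l.length, rfl⟩
    set f : Fin (m + 1) → ℕ := fun i => c.get (Fin.cast hm.symm i) with hf
    have hsum : ∑ j, f j = c.sum := by
      have h1 : ∑ j : Fin c.length, c.get j = c.sum := by
        simp [Fin.sum_univ_getElem c]
      rw [← h1]
      exact Fintype.sum_equiv (finCongr hm.symm) _ _ fun i => rfl
    have hP : pReg q c = mySf q f / (Nat.multinomial Finset.univ f : ℝ) := by
      rw [show pReg q c = mySf q c.get / (Nat.multinomial Finset.univ c.get : ℝ) from rfl,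
        mySf_cast q hm c.get f (fun i => rfl), myM_cast hm c.get f (fun i => rfl)]
    have key : ∀ p : Fin (m + 1),
        q c.sum (f p) * mySf q (f ∘ p.succAbove) / (Nat.multinomial Finset.univ f : ℝ)
          = 1 / (c.sum.choose (c.getD (p : ℕ) 0) : ℝ) * q c.sum (c.getD (p : ℕ) 0)
              * pReg q (c.eraseIdx (p : ℕ)) := by
      intro p
      have hj : (p : ℕ) < c.length := by rw [hm]; exact p.isLt
      have hgetD : c.getD (p : ℕ) 0 = f p := by
        rw [List.getD_eq_getElem c 0 hj]; rfl
      have hlen : (c.eraseIdx (p : ℕ)).length = m := by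
        have := List.length_eraseIdx_add_one hj; omega
      have hpt : ∀ i : Fin ((c.eraseIdx (p : ℕ)).length),
          (c.eraseIdx (p : ℕ)).get i = (f ∘ p.succAbove) (Fin.cast hlen i) := by
        intro i
        rw [List.get_eq_getElem, List.getElem_eraseIdx]
        by_cases h : (i : ℕ) < (p : ℕ)
        · rw [dif_pos h]
          have hs : p.succAbove (Fin.cast hlen i) = Fin.castSucc (Fin.cast hlen i) :=
            Fin.succAbove_of_castSucc_lt p _ (by simpa [Fin.lt_def] using h)
          simp only [Function.comp_apply, hs, hf]
          rfl
        · rw [dif_neg h]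
          have hs : p.succAbove (Fin.cast hlen i) = Fin.succ (Fin.cast hlen i) :=
            Fin.succAbove_of_le_castSucc p _ (by simp [Fin.le_def]; omega)
          simp only [Function.comp_apply, hs, hf]
          rfl
      have hPe : pReg q (c.eraseIdx (p : ℕ))
          = mySf q (f ∘ p.succAbove) / (Nat.multinomial Finset.univ (f ∘ p.succAbove) : ℝ) := by
        rw [show pReg q (c.eraseIdx (p : ℕ)) = mySf q (c.eraseIdx (p : ℕ)).get
              / (Nat.multinomial Finset.univ (c.eraseIdx (p : ℕ)).get : ℝ) from rfl,
          mySf_cast q hlen _ _ hpt, myM_cast hlen _ _ hpt]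
      have hM : Nat.multinomial Finset.univ f
          = c.sum.choose (f p) * Nat.multinomial Finset.univ (f ∘ p.succAbove) := by
        rw [myM_succ f p, hsum]
      have hMp : (0 : ℝ) < (Nat.multinomial Finset.univ (f ∘ p.succAbove) : ℝ) := by
        exact_mod_cast Nat.multinomial_pos _ _
      have hCpos : (0 : ℝ) < (c.sum.choose (f p) : ℝ) := by
        have : f p ≤ c.sum := by
          rw [← hsum]; exact Finset.single_le_sum (fun i _ => Nat.zero_le _) (Finset.mem_univ p)
        exact_mod_cast Nat.choose_pos this
      rw [hgetD, hPe, hM]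
      push_cast
      rw [div_mul_eq_mul_div, mul_comm ((c.sum.choose (f p) : ℝ)) _, ← div_div]
      ring
    rw [hP, mySf_succ]
    simp only [hsum]
    rw [Finset.sum_div, hm, ← Fin.sum_univ_eq_sum_range
      (fun j => 1 / (c.sum.choose (c.getD j 0) : ℝ) * q c.sum (c.getD j 0)
        * pReg q (c.eraseIdx j)) (m + 1)]
    exact Finset.sum_congr rfl fun p _ => key p
end

section
/- Let θ > 0. Define q(1:1) = 1 and, for n ≥ 2, q(n:1) = θ/(n−1+θ), q(n:2) = (n−1)/(n−1+θ), and q(n:k) = 0 for 3 ≤ k ≤ n. Then the Ewens EPPF p(n_1,…,n_ℓ) = θ^{ℓ−1} · ∏_{i=1}^ℓ (n_i−1)! / ∏_{j=1}^{n−1}(θ+j), where n = n_1+⋯+n_ℓ, satisfies Möhle's recursion with coefficients from q for every composition (n_1,…,n_ℓ) of every n ≥ 2. -/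
open Finset MeasureTheory

/-- The Ewens EPPF with parameter `θ`:
`p(n_1,…,n_ℓ) = θ^{ℓ-1} ∏ (n_i - 1)! / ∏_{j=1}^{n-1} (θ + j)`. -/
noncomputable def ewensEPPF (θ : ℝ) (c : List ℕ) : ℝ :=
  θ ^ (c.length - 1) * (c.map fun m => ((m - 1).factorial : ℝ)).prod
    / ∏ j ∈ Finset.range (c.sum - 1), (θ + (j : ℝ) + 1)

private lemma ewensAux_sum_getD (c : List ℕ) : ∑ i ∈ Finset.range c.length, c.getD i 0 = c.sum := by
  induction c with
  | nil => simp
  | cons a l ih =>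
    rw [List.length_cons, Finset.sum_range_succ']
    simp only [List.getD_cons_succ, List.getD_cons_zero, List.sum_cons, ih]
    omega

private lemma ewensAux_denom_pos (θ : ℝ) (hθ : 0 < θ) (m : ℕ) : 0 < ∏ j ∈ Finset.range m, (θ + (j : ℝ) + 1) := by
  apply Finset.prod_pos
  intro j _
  positivity

private lemma ewensAux_decomp (c : List ℕ) (j : ℕ) (hj : j < c.length) :
    c = c.take j ++ c.getD j 0 :: c.drop (j + 1) := by
  rw [List.getD_eq_getElem c 0 hj]
  conv_lhs => rw [← List.take_append_drop j c, List.drop_eq_getElem_cons hj]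

private lemma ewensAux_erase (θ : ℝ) (hθ : 0 < θ) (t d : List ℕ) (h : 1 ≤ t.sum + d.sum) :
    ewensEPPF θ (t ++ d) * θ
      = ewensEPPF θ (t ++ 1 :: d) * (θ + ((t ++ 1 :: d).sum : ℝ) - 1) := by
  have hld : 1 ≤ t.length + d.length := by
    by_contra hcon
    have h1 : t.length = 0 := by omega
    have h2 : d.length = 0 := by omega
    rw [List.length_eq_zero_iff] at h1 h2
    rw [h1, h2] at h
    simp at h
  unfold ewensEPPF
  have hsum1 : (t ++ d).sum = t.sum + d.sum := List.sum_append
  have hsum2 : (t ++ 1 :: d).sum = t.sum + d.sum + 1 := by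
    simp only [List.sum_append, List.sum_cons]; omega
  have hlen1 : (t ++ d).length = t.length + d.length := List.length_append
  have hlen2 : (t ++ 1 :: d).length = t.length + d.length + 1 := by
    simp only [List.length_append, List.length_cons]; omega
  have hprod : ((t ++ 1 :: d).map fun m => (((m : ℕ) - 1).factorial : ℝ)).prod
      = ((t ++ d).map fun m => (((m : ℕ) - 1).factorial : ℝ)).prod := by
    simp [List.prod_append]
  rw [hsum1, hsum2, hlen1, hlen2, hprod]
  obtain ⟨L, hL⟩ : ∃ L, t.length + d.length = L + 1 := ⟨t.length + d.length - 1, by omega⟩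
  obtain ⟨S, hS⟩ : ∃ S, t.sum + d.sum = S + 1 := ⟨t.sum + d.sum - 1, by omega⟩
  rw [hL, hS]
  simp only [Nat.add_sub_cancel]
  rw [pow_succ, Finset.prod_range_succ]
  have h1 : (0:ℝ) < ∏ j ∈ Finset.range S, (θ + (j : ℝ) + 1) := ewensAux_denom_pos θ hθ S
  have h2 : (0:ℝ) < θ + (S:ℝ) + 1 := by positivity
  push_cast
  field_simp
  ring

private lemma ewensAux_set (θ : ℝ) (hθ : 0 < θ) (t d : List ℕ) (a : ℕ) (ha : 2 ≤ a) :
    ewensEPPF θ (t ++ (a - 1) :: d) * ((a : ℝ) - 1)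
      = ewensEPPF θ (t ++ a :: d) * (θ + ((t ++ a :: d).sum : ℝ) - 1) := by
  unfold ewensEPPF
  have hsum1 : (t ++ (a - 1) :: d).sum = t.sum + d.sum + (a - 1) := by
    simp only [List.sum_append, List.sum_cons]; omega
  have hsum2 : (t ++ a :: d).sum = t.sum + d.sum + a := by
    simp only [List.sum_append, List.sum_cons]; omega
  have hlen1 : (t ++ (a - 1) :: d).length = t.length + d.length + 1 := by
    simp only [List.length_append, List.length_cons]; omega
  have hlen2 : (t ++ a :: d).length = t.length + d.length + 1 := by
    simp only [List.length_append, List.length_cons]; omega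
  have hfac : ((a : ℕ) - 1).factorial = (a - 1) * (a - 2).factorial := by
    have h' : a - 1 = (a - 2) + 1 := by omega
    rw [h', Nat.factorial_succ, ← h']
  have hprod1 : ((t ++ (a - 1) :: d).map fun m => (((m : ℕ) - 1).factorial : ℝ)).prod
      = (t.map fun m => (((m : ℕ) - 1).factorial : ℝ)).prod * ((a - 2).factorial : ℝ)
        * (d.map fun m => (((m : ℕ) - 1).factorial : ℝ)).prod := by
    have h' : a - 1 - 1 = a - 2 := by omega
    simp [List.prod_append, h']
    ring
  have hprod2 : ((t ++ a :: d).map fun m => (((m : ℕ) - 1).factorial : ℝ)).prod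
      = (t.map fun m => (((m : ℕ) - 1).factorial : ℝ)).prod * (((a:ℕ) - 1).factorial : ℝ)
        * (d.map fun m => (((m : ℕ) - 1).factorial : ℝ)).prod := by
    simp [List.prod_append]
    ring
  rw [hsum1, hsum2, hlen1, hlen2, hprod1, hprod2, hfac]
  obtain ⟨S, hS⟩ : ∃ S, t.sum + d.sum + a = S + 2 := ⟨t.sum + d.sum + a - 2, by omega⟩
  have hS1 : t.sum + d.sum + (a - 1) = S + 1 := by omega
  rw [hS, hS1]
  simp only [Nat.add_sub_cancel]
  have h' : S + 2 - 1 = S + 1 := by omega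
  rw [h', Finset.prod_range_succ]
  have h1 : (0:ℝ) < ∏ j ∈ Finset.range S, (θ + (j : ℝ) + 1) := ewensAux_denom_pos θ hθ S
  have h2 : (0:ℝ) < θ + (S:ℝ) + 1 := by positivity
  push_cast [Nat.cast_sub (by omega : 1 ≤ a), Nat.cast_sub (by omega : 2 ≤ a)]
  field_simp
  ring

/-- The Ewens EPPF satisfies Möhle's recursion with the decrement matrix
of Kingman's coalescent freezing at rate `ρ = θ/2`: `q(n:1) = θ/(n-1+θ)`,
`q(n:2) = (n-1)/(n-1+θ)`, and `q(n:k) = 0` for `3 ≤ k ≤ n`. -/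
theorem ewens_satisfies_mohle_recursion (θ : ℝ) (hθ : 0 < θ) (q : ℕ → ℕ → ℝ)
    (h11 : q 1 1 = 1)
    (h1 : ∀ n, 2 ≤ n → q n 1 = θ / ((n : ℝ) - 1 + θ))
    (h2 : ∀ n, 2 ≤ n → q n 2 = ((n : ℝ) - 1) / ((n : ℝ) - 1 + θ))
    (h0 : ∀ n k, 2 ≤ n → 3 ≤ k → k ≤ n → q n k = 0) :
    ∀ c, IsComposition c → 2 ≤ c.sum → MohleRec q (ewensEPPF θ) c := by
  intro c hc hs
  unfold MohleRec mohleRHS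
  have hn0 : ((c.sum : ℝ)) ≠ 0 := by
    have : (2:ℝ) ≤ (c.sum : ℝ) := by exact_mod_cast hs
    linarith
  have hnθ : (0:ℝ) < (c.sum : ℝ) - 1 + θ := by
    have : (2:ℝ) ≤ (c.sum : ℝ) := by exact_mod_cast hs
    linarith
  have hn1 : (0:ℝ) < (c.sum : ℝ) - 1 := by
    have : (2:ℝ) ≤ (c.sum : ℝ) := by exact_mod_cast hs
    linarith
  -- reduce the k-sum to k = 2
  rw [Finset.sum_eq_single_of_mem 2 (Finset.mem_Icc.mpr ⟨le_refl 2, hs⟩)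
    (fun k hk hne => by
      rw [h0 c.sum k hs (by have := Finset.mem_Icc.mp hk; omega) (Finset.mem_Icc.mp hk).2]
      ring)]
  rw [Finset.mul_sum, Finset.mul_sum, ← Finset.sum_add_distrib]
  rw [Finset.sum_congr rfl
    (g := fun j => ewensEPPF θ c * (c.getD j 0 : ℝ) / (c.sum : ℝ)) ?_]
  · rw [← Finset.sum_div, ← Finset.mul_sum]
    have hsum : ∑ j ∈ Finset.range c.length, (c.getD j 0 : ℝ) = (c.sum : ℝ) := by
      exact_mod_cast congrArg (Nat.cast : ℕ → ℝ) (ewensAux_sum_getD c)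
    rw [hsum, mul_div_assoc, div_self hn0, mul_one]
  · intro j hj
    beta_reduce
    have hj' : j < c.length := Finset.mem_range.mp hj
    obtain ⟨a, hA⟩ : ∃ a, c.getD j 0 = a := ⟨_, rfl⟩
    rw [hA]
    have hd : c = c.take j ++ a :: c.drop (j + 1) := by
      rw [← hA]; exact ewensAux_decomp c j hj'
    have hmem : a ∈ c := by rw [hd]; simp
    have hapos : 0 < a := hc.2 _ hmem
    have hsplit : (c.take j).sum + (c.drop (j + 1)).sum + a = c.sum := by
      conv_rhs => rw [hd]
      simp only [List.sum_append, List.sum_cons]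
      omega
    rcases (by omega : a = 1 ∨ 2 ≤ a) with ha | ha
    · rw [if_pos ha, if_neg (by omega)]
      rw [List.eraseIdx_eq_take_drop_succ]
      have hkey := ewensAux_erase θ hθ (c.take j) (c.drop (j + 1)) (by omega)
      rw [ha] at hd
      rw [← hd] at hkey
      have hE : ewensEPPF θ (c.take j ++ c.drop (j + 1))
          = ewensEPPF θ c * (θ + (c.sum : ℝ) - 1) / θ := by
        rw [eq_div_iff (ne_of_gt hθ)]
        exact hkey
      rw [hE, h1 c.sum hs, ha, Nat.cast_one]
      obtain ⟨s, hs'⟩ : ∃ s : ℝ, (c.sum : ℝ) = s := ⟨_, rfl⟩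
      rw [hs'] at hn0 hnθ ⊢
      field_simp
      ring
    · rw [if_neg (by omega), if_pos ha]
      have hsub : a - 2 + 1 = a - 1 := by omega
      rw [hsub, List.set_eq_take_cons_drop _ hj']
      have hkey := ewensAux_set θ hθ (c.take j) (c.drop (j + 1)) a ha
      rw [← hd] at hkey
      have ha1 : (0:ℝ) < (a : ℝ) - 1 := by
        have : (2:ℝ) ≤ (a : ℝ) := by exact_mod_cast ha
        linarith
      have hE : ewensEPPF θ (c.take j ++ (a - 1) :: c.drop (j + 1))
          = ewensEPPF θ c * (θ + (c.sum : ℝ) - 1) / ((a : ℝ) - 1) := by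
        rw [eq_div_iff (ne_of_gt ha1)]
        exact hkey
      rw [hE, h2 c.sum hs, Nat.cast_choose_two, Nat.cast_choose_two]
      obtain ⟨s, hs'⟩ : ∃ s : ℝ, (c.sum : ℝ) = s := ⟨_, rfl⟩
      obtain ⟨α, hα⟩ : ∃ x : ℝ, (a : ℝ) = x := ⟨_, rfl⟩
      rw [hs'] at hn0 hnθ hn1 ⊢
      rw [hα] at ha1 ⊢
      field_simp [hn0, ne_of_gt hnθ, ne_of_gt hn1, ne_of_gt ha1]
      ring
end

section
/- Let ρ > 0. Define q(1:1) = 1 and, for n ≥ 2, q(n:1) = nρ/(1+nρ), q(n:n) = 1/(1+nρ), and q(n:k) = 0 for 2 ≤ k ≤ n−1. Then the unique function p on compositions with p(1) = 1 satisfying Möhle's recursion with coefficients from q vanishes on every composition having at least two parts of size ≥ 2; that is, p is supported on hook shapes (m,1,1,…,1). -/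
open Finset MeasureTheory

lemma two_mul_length_le_sum : ∀ l : List ℕ, (∀ x ∈ l, 2 ≤ x) → 2 * l.length ≤ l.sum := by
  intro l hl
  induction l with
  | nil => simp
  | cons a t ih =>
    have ha := hl a (by simp)
    have := ih (fun x hx => hl x (List.mem_cons_of_mem _ hx))
    simp only [List.sum_cons, List.length_cons]
    omega

/-- For the hook decrement matrix `q(n:1) = nρ/(1+nρ)`, `q(n:n) = 1/(1+nρ)`,
`q(n:k) = 0` for `2 ≤ k ≤ n-1`, the unique solution of Möhle's recursion with `p(1) = 1`
vanishes on every composition having at least two parts of size `≥ 2`. -/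
theorem hook_decrement_gives_hook_partitions (ρ : ℝ) (hρ : 0 < ρ) (q : ℕ → ℕ → ℝ)
    (h11 : q 1 1 = 1)
    (h1 : ∀ n, 2 ≤ n → q n 1 = (n : ℝ) * ρ / (1 + (n : ℝ) * ρ))
    (hn : ∀ n, 2 ≤ n → q n n = 1 / (1 + (n : ℝ) * ρ))
    (h0 : ∀ n k, 2 ≤ n → 2 ≤ k → k ≤ n - 1 → q n k = 0)
    (p : List ℕ → ℝ) (hp1 : p [1] = 1)
    (hM : ∀ c, IsComposition c → 2 ≤ c.sum → MohleRec q p c) :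
    ∀ c, IsComposition c → 2 ≤ (c.filter fun x => 2 ≤ x).length → p c = 0 := by
  suffices H : ∀ n (l : List ℕ), l.sum = n → IsComposition l →
      2 ≤ (l.filter fun x => 2 ≤ x).length → p l = 0 by
    intro l hc hf; exact H l.sum l rfl hc hf
  intro n
  induction n using Nat.strong_induction_on with
  | _ n IH =>
  intro l hsum hc hf
  subst hsum
  have hpos := hc.2
  have hlen2 : 2 ≤ l.length :=
    le_trans hf (List.length_filter_le _ _)
  -- 4 ≤ l.sum
  have hfmem : ∀ x ∈ l.filter (fun x => 2 ≤ x), 2 ≤ x := by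
    intro x hx
    have := List.of_mem_filter hx
    simpa using this
  have hfsum : 4 ≤ (l.filter (fun x => 2 ≤ x)).sum := by
    have := two_mul_length_le_sum _ hfmem
    omega
  have hsum4 : 4 ≤ l.sum :=
    le_trans hfsum ((List.filter_sublist (l := l)).sum_le_sum (by simp))
  -- decomposition
  have hdecomp : ∀ j, (hj : j < l.length) → l = l.take j ++ l[j] :: l.drop (j + 1) := by
    intro j hj
    conv_lhs => rw [← List.take_append_drop j l, List.drop_eq_getElem_cons hj]
  have herase : ∀ j, l.eraseIdx j = l.take j ++ l.drop (j + 1) :=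
    fun j => List.eraseIdx_eq_take_drop_succ l j
  have hsumdec : ∀ j, (hj : j < l.length) →
      l.sum = (l.take j).sum + l[j] + (l.drop (j + 1)).sum := by
    intro j hj
    conv_lhs => rw [hdecomp j hj]
    rw [List.sum_append, List.sum_cons]
    omega
  have hene : ∀ j, j < l.length → l.eraseIdx j ≠ [] := by
    intro j hj
    have : (l.eraseIdx j).length = l.length - 1 := by
      rw [herase j]
      simp [List.length_append, List.length_take, List.length_drop]
      omega
    intro hnil
    rw [hnil] at this
    simp at this
    omega
  have hemem : ∀ j, (hj : j < l.length) → ∀ x ∈ l.eraseIdx j, x ∈ l := by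
    intro j hj x hx
    rw [herase j, List.mem_append] at hx
    rw [hdecomp j hj]
    simp only [List.mem_append, List.mem_cons]
    tauto
  have hcjlt : ∀ j, (hj : j < l.length) → l[j] < l.sum := by
    intro j hj
    have hs := hsumdec j hj
    have hne := hene j hj
    have hpos' : 0 < (l.eraseIdx j).sum :=
      List.sum_pos _ (fun x hx => hpos x (hemem j hj x hx)) hne
    have : (l.eraseIdx j).sum = (l.take j).sum + (l.drop (j + 1)).sum := by
      rw [herase j, List.sum_append]
    omega
  -- apply Möhle's recursion
  have hrec := hM l hc (by omega)
  rw [MohleRec] at hrec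
  rw [hrec, mohleRHS]
  have h1s : (∑ j ∈ Finset.range l.length,
      (if l.getD j 0 = 1 then p (l.eraseIdx j) else 0)) = 0 := by
    apply Finset.sum_eq_zero
    intro j hj
    simp only [Finset.mem_range] at hj
    by_cases h : l.getD j 0 = 1
    · rw [if_pos h]
      have hx1 : l[j] = 1 := by rwa [List.getD_eq_getElem l 0 hj] at h
      have hsum' : (l.eraseIdx j).sum + 1 = l.sum := by
        have := hsumdec j hj
        have : (l.eraseIdx j).sum = (l.take j).sum + (l.drop (j + 1)).sum := by
          rw [herase j, List.sum_append]
        omega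
      have hcomp : IsComposition (l.eraseIdx j) :=
        ⟨hene j hj, fun x hx => hpos x (hemem j hj x hx)⟩
      have hfe : ((l.eraseIdx j).filter fun x => 2 ≤ x).length
          = (l.filter fun x => 2 ≤ x).length := by
        rw [herase j]
        conv_rhs => rw [hdecomp j hj]
        simp [List.filter_append, List.filter_cons, hx1]
      exact IH _ (by omega) _ rfl hcomp (by omega)
    · rw [if_neg h]
  have h2s : (∑ k ∈ Finset.Icc 2 l.sum, q l.sum k *
      ∑ j ∈ Finset.range l.length,
        (if k ≤ l.getD j 0 then
            ((l.getD j 0).choose k : ℝ) / (l.sum.choose k : ℝ) * p (l.set j (l.getD j 0 - k + 1))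
          else 0)) = 0 := by
    apply Finset.sum_eq_zero
    intro k hk
    simp only [Finset.mem_Icc] at hk
    rcases eq_or_lt_of_le hk.2 with hkn | hkn
    · have hinner : (∑ j ∈ Finset.range l.length,
          (if k ≤ l.getD j 0 then
              ((l.getD j 0).choose k : ℝ) / (l.sum.choose k : ℝ) * p (l.set j (l.getD j 0 - k + 1))
            else 0)) = 0 := by
        apply Finset.sum_eq_zero
        intro j hj
        simp only [Finset.mem_range] at hj
        rw [if_neg]
        rw [List.getD_eq_getElem l 0 hj]
        have := hcjlt j hj
        omega
      rw [hinner, mul_zero]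
    · rw [h0 l.sum k (by omega) hk.1 (by omega), zero_mul]
  rw [h1s, h2s, mul_zero, add_zero]
end

section
/- Let q be an infinite decrement matrix satisfying the consistency recursion for all b ≥ 1. If q(2:1) = 1 then q(n:1) = 1 for all n ≥ 1; and if q(2:1) = 0 then q(n:1) = 0 for all n ≥ 2. -/
open Finset MeasureTheory

/-- For a consistent infinite decrement matrix: if `q(2:1) = 1` then
`q(n:1) = 1` for all `n ≥ 1` (pure freeze), and if `q(2:1) = 0` then `q(n:1) = 0` for all
`n ≥ 2` (no freeze). -/
theorem degenerate_freeze_propagates (q : ℕ → ℕ → ℝ) (hq : IsDecrementMatrix q)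
    (hc : ∀ b, 1 ≤ b → ConsistencyRec q b) :
    (q 2 1 = 1 → ∀ n, 1 ≤ n → q n 1 = 1) ∧
    (q 2 1 = 0 → ∀ n, 2 ≤ n → q n 1 = 0) := by
  obtain ⟨hnn, hsum⟩ := hq
  have h11 : q 1 1 = 1 := by simpa using hsum 1 le_rfl
  have hbd : ∀ b : ℕ, 2 ≤ b → q b 1 + q b 2 ≤ 1 := by
    intro b hb
    have h := hsum b (by omega)
    have hsub : ({1, 2} : Finset ℕ) ⊆ Finset.Icc 1 b := by
      intro x hx; simp only [Finset.mem_insert, Finset.mem_singleton] at hx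
      rcases hx with h | h <;> simp [Finset.mem_Icc] <;> omega
    have hle : ∑ k ∈ ({1, 2} : Finset ℕ), q b k ≤ ∑ k ∈ Finset.Icc 1 b, q b k :=
      Finset.sum_le_sum_of_subset_of_nonneg hsub
        (fun k hk _ => hnn b k (Finset.mem_Icc.mp hk).1 (Finset.mem_Icc.mp hk).2)
    rw [Finset.sum_insert (by simp), Finset.sum_singleton] at hle
    linarith
  constructor
  · intro h2
    have key : ∀ n, 2 ≤ n → q n 1 = 1 := by
      intro n hn
      induction n, hn using Nat.le_induction with
      | base => exact h2
      | succ b hb ih =>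
        have hrec := (hc b (by omega)).2
        rw [ih] at hrec
        have hbpos : (0 : ℝ) < (b : ℝ) + 1 := by positivity
        have hA := hnn (b + 1) 1 (by omega) (by omega)
        have hB := hnn (b + 1) 2 (by omega) (by omega)
        have hs := hbd (b + 1) (by omega)
        have hb2 : (2 : ℝ) ≤ (b : ℝ) := by exact_mod_cast hb
        have hrec' : (b : ℝ) + 1 = ((b : ℝ) + 1) * q (b + 1) 1 + 2 * q (b + 1) 2 := by
          field_simp at hrec
          nlinarith [hrec]
        have hB0 : q (b + 1) 2 = 0 := by nlinarith
        have hfin : ((b : ℝ) + 1) * 1 = ((b : ℝ) + 1) * q (b + 1) 1 := by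
          rw [hB0] at hrec'; linarith
        exact (mul_left_cancel₀ (ne_of_gt hbpos) hfin).symm
    intro n hn
    rcases Nat.lt_or_ge n 2 with h | h
    · interval_cases n; exact h11
    · exact key n h
  · intro h2 n hn
    induction n, hn using Nat.le_induction with
    | base => exact h2
    | succ b hb ih =>
      have hrec := (hc b (by omega)).2
      rw [ih] at hrec
      have hbpos : (0 : ℝ) < (b : ℝ) := by positivity
      have hb1 : (0 : ℝ) < (b : ℝ) + 1 := by positivity
      simp only [mul_zero, add_zero] at hrec
      field_simp at hrec
      replace hrec : b = 0 ∨ q (b + 1) 1 = 0 := by rcases mul_eq_zero.mp (show (b : ℝ) * q (b + 1) 1 = 0 by linarith) with h | h; exact Or.inl (by exact_mod_cast h); exact Or.inr h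
      rcases hrec with h | h
      · omega
      · exact h
end

section
/- Let q be an infinite decrement matrix satisfying the consistency recursion for all b ≥ 1. If q(3:1) > 0, q(3:2) > 0 and q(3:1) + q(3:2) = 1, then for every n ≥ 3 one has q(n:1) > 0, q(n:2) > 0 and q(n:1) + q(n:2) = 1 (so q(n:k) = 0 for all 3 ≤ k ≤ n). -/
open Finset MeasureTheory

/-! Induction on the row. In the consistency equation for `q(n:k)`, `k ≥ 3`, the entries
`q(n+1:k)` and `q(n+1:k+1)` appear with positive weights, so they vanish with `q(n:k)`; the row
sum then gives `q(n+1:1) + q(n+1:2) = 1`. If `q(n+1:1)` or `q(n+1:2)` vanished, the other would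
be `1`, and the equation for `x = q(n:1)` resp. `x = q(n:2)` would reduce to `(n+1) x = 2 x`
resp. `(n+1) x = x`, contradicting `x > 0`. -/

def IsKingmanFreezeRow (q : ℕ → ℕ → ℝ) (n : ℕ) : Prop :=
  0 < q n 1 ∧ 0 < q n 2 ∧ q n 1 + q n 2 = 1 ∧ ∀ k, 3 ≤ k → k ≤ n → q n k = 0

theorem IsDecrementMatrix.add_add_sum_Icc_three {q : ℕ → ℕ → ℝ} (hq : IsDecrementMatrix q)
    {b : ℕ} (hb : 2 ≤ b) : q b 1 + q b 2 + ∑ k ∈ Icc 3 b, q b k = 1 := by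
  have hIcc : Icc 1 b = insert 1 (insert 2 (Icc 3 b)) := by
    ext x; simp only [mem_Icc, mem_insert]; omega
  rw [← hq.2 b (by omega), hIcc, sum_insert (by simp), sum_insert (by simp), add_assoc]

namespace ConsistencyRec

variable {q : ℕ → ℕ → ℝ} {b : ℕ}

theorem eq_zero_of_eq_zero (hq : IsDecrementMatrix q) (hrec : ConsistencyRec q b) {k : ℕ}
    (hk : 2 ≤ k) (hkb : k ≤ b) (hzero : q b k = 0) :
    q (b + 1) k = 0 ∧ q (b + 1) (k + 1) = 0 := by
  have hkb' : (k : ℝ) ≤ b := by exact_mod_cast hkb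
  have hnext : 0 < ((k : ℝ) + 1) / ((b : ℝ) + 1) := by positivity
  have hsame : 0 < ((b : ℝ) + 1 - k) / ((b : ℝ) + 1) := div_pos (by linarith) (by positivity)
  have hpos := hrec.1 k hk hkb
  rw [hzero, mul_zero, mul_zero, add_zero, add_zero, eq_comm] at hpos
  obtain ⟨hnext0, hsame0⟩ := (add_eq_zero_iff_of_nonneg
    (mul_nonneg hnext.le (hq.1 _ _ (by omega) (by omega)))
    (mul_nonneg hsame.le (hq.1 _ _ (by omega) (by omega)))).mp hpos
  exact ⟨(mul_eq_zero.mp hsame0).resolve_left hsame.ne',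
    (mul_eq_zero.mp hnext0).resolve_left hnext.ne'⟩

theorem pos_one_of_pos (hq : IsDecrementMatrix q) (hrec : ConsistencyRec q b) (hb : 2 ≤ b)
    (hsum : q (b + 1) 1 + q (b + 1) 2 = 1) (hpos : 0 < q b 1) : 0 < q (b + 1) 1 := by
  refine (hq.1 _ _ le_rfl (by omega)).lt_of_ne' fun hzero => hpos.ne' ?_
  have htwo : q (b + 1) 2 = 1 := by linarith
  have h := hrec.2
  rw [hzero, htwo] at h
  have hb' : (2 : ℝ) ≤ b := by exact_mod_cast hb
  have hmul : ((b : ℝ) - 1) * q b 1 = 0 := by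
    field_simp at h
    linarith
  exact (mul_eq_zero.mp hmul).resolve_left (by linarith)

theorem pos_two_of_pos (hq : IsDecrementMatrix q) (hrec : ConsistencyRec q b) (hb : 2 ≤ b)
    (hsum : q (b + 1) 1 + q (b + 1) 2 = 1) (hthree : q (b + 1) 3 = 0) (hpos : 0 < q b 2) :
    0 < q (b + 1) 2 := by
  refine (hq.1 _ _ (by omega) (by omega)).lt_of_ne' fun hzero => hpos.ne' ?_
  have hone : q (b + 1) 1 = 1 := by linarith
  have h := hrec.1 2 le_rfl hb
  rw [hzero, hone, hthree] at h
  have hmul : (b : ℝ) * q b 2 = 0 := by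
    field_simp at h
    linarith
  exact (mul_eq_zero.mp hmul).resolve_left (by positivity)

end ConsistencyRec

theorem isKingmanFreezeRow_three {q : ℕ → ℕ → ℝ} (hq : IsDecrementMatrix q)
    (h1 : 0 < q 3 1) (h2 : 0 < q 3 2) (hsum : q 3 1 + q 3 2 = 1) : IsKingmanFreezeRow q 3 := by
  refine ⟨h1, h2, hsum, fun k hk hk3 => ?_⟩
  obtain rfl : k = 3 := by omega
  have hrow := hq.add_add_sum_Icc_three (b := 3) (by norm_num)
  rw [Icc_self, sum_singleton] at hrow
  linarith

theorem IsKingmanFreezeRow.succ {q : ℕ → ℕ → ℝ} {n : ℕ} (hq : IsDecrementMatrix q)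
    (hrec : ConsistencyRec q n) (hn : 3 ≤ n) (h : IsKingmanFreezeRow q n) :
    IsKingmanFreezeRow q (n + 1) := by
  obtain ⟨h1, h2, -, hzero⟩ := h
  have hzero' : ∀ k, 3 ≤ k → k ≤ n + 1 → q (n + 1) k = 0 := by
    intro k hk hkn
    rcases hkn.lt_or_eq with hlt | rfl
    · exact (hrec.eq_zero_of_eq_zero hq (by omega) (by omega) (hzero k hk (by omega))).1
    · exact (hrec.eq_zero_of_eq_zero hq (by omega) le_rfl (hzero n hn le_rfl)).2
  have hsum : q (n + 1) 1 + q (n + 1) 2 = 1 := by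
    have hrow := hq.add_add_sum_Icc_three (b := n + 1) (by omega)
    rwa [sum_eq_zero fun k hk => hzero' k (mem_Icc.1 hk).1 (mem_Icc.1 hk).2, add_zero] at hrow
  exact ⟨hrec.pos_one_of_pos hq (by omega) hsum h1,
    hrec.pos_two_of_pos hq (by omega) hsum (hzero' 3 le_rfl (by omega)) h2, hsum, hzero'⟩

/-- For a consistent infinite decrement matrix, if
`q(3:1) > 0`, `q(3:2) > 0` and `q(3:1) + q(3:2) = 1`, then for every `n ≥ 3` one has
`q(n:1) > 0`, `q(n:2) > 0`, `q(n:1) + q(n:2) = 1`, and `q(n:k) = 0` for `3 ≤ k ≤ n`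
(Kingman's coalescent with freeze). -/
theorem kingman_with_freeze_case_propagates (q : ℕ → ℕ → ℝ) (hq : IsDecrementMatrix q)
    (hc : ∀ b, 1 ≤ b → ConsistencyRec q b)
    (h1 : 0 < q 3 1) (h2 : 0 < q 3 2) (hsum : q 3 1 + q 3 2 = 1) :
    ∀ n, 3 ≤ n → 0 < q n 1 ∧ 0 < q n 2 ∧ q n 1 + q n 2 = 1 ∧
      ∀ k, 3 ≤ k → k ≤ n → q n k = 0 := by
  intro n hn
  induction n, hn using Nat.le_induction with
  | base => exact isKingmanFreezeRow_three hq h1 h2 hsum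
  | succ n hn ih => exact IsKingmanFreezeRow.succ hq (hc n (by omega)) hn ih
end
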